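/- arXiv:1506.03596 — 15 statements merged into one kernel-verified Lean document; each statement's English description precedes it below -/
import Mathlib

section
/- For all natural numbers n and s, the following identity holds in ℚ: Σ_{m=1}^{n} Σ_{q=1}^{min(m,s)} C(s,q) · ( ε(m,q) + Σ_{(n₁,…,n_q) ∈ Ω_q(m)} ⌊(1/2)·∏_{j=1}^{q}(n_j+1)⌋ ) = T(n,2s) + T(⌊n/2⌋,s). -/
/-!
Write `N_f = ∏ (f_j + 1)` for a composition `f` of `m` into `q` parts. `N_f` is odd exactly when
every part is even, and the compositions of `2k` into even parts are the doubles of the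
compositions of `k`, which are counted by `ε(2k, q) = C(k-1, q-1)`. Hence
`⌊N_f / 2⌋ = (N_f - [all parts even]) / 2`, and each summand of the theorem becomes
`C(s,q) (Σ_f N_f + ε(m,q)) / 2`.

Both halves are read off generating functions. With `G = 1/(1-X)`, compositions weighted by
`∏ (f_j + 1)` have generating function `(G² - 1)^q`, and unweighted ones `(G - 1)^q`; the binomial
theorem turns the sums over `q` into `[X^m] G^{2s}` and `[X^k] G^s`, and summing the coefficients
of `G^a` up to `n` gives `[X^n] G^{a+1} - 1 = C(n+a, a) - 1`.
-/

open Finset PowerSeries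

/-- The paper's `Ω_q(m)`. -/
def posAntidiagonalTuple (q m : ℕ) : Finset (Fin q → ℕ) :=
  (Nat.antidiagonalTuple q m).filter fun f => ∀ j, 0 < f j

theorem mem_posAntidiagonalTuple {q m : ℕ} {f : Fin q → ℕ} :
    f ∈ posAntidiagonalTuple q m ↔ ∑ j, f j = m ∧ ∀ j, 0 < f j := by
  rw [posAntidiagonalTuple, mem_filter, Nat.mem_antidiagonalTuple]

theorem PowerSeries.coeff_pow_eq_sum_antidiagonalTuple {R : Type*} [CommSemiring R]
    (φ : R⟦X⟧) (q m : ℕ) :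
    coeff m (φ ^ q) = ∑ f ∈ Nat.antidiagonalTuple q m, ∏ j, coeff (f j) φ := by
  classical
  have h := coeff_prod (fun _ : Fin q => φ) m univ
  rw [prod_const, card_univ, Fintype.card_fin] at h
  rw [h, ← piAntidiag_univ_fin_eq_antidiagonalTuple, finsuppAntidiag, sum_map,
    ← sum_attach (piAntidiag _ _)]
  rfl

theorem sum_posAntidiagonalTuple_prod_eq_coeff {R : Type*} [CommSemiring R] (g : ℕ → R)
    (q m : ℕ) :
    ∑ f ∈ posAntidiagonalTuple q m, ∏ j, g (f j) =
      coeff m ((X * PowerSeries.mk fun k => g (k + 1)) ^ q) := by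
  rw [coeff_pow_eq_sum_antidiagonalTuple, eq_comm,
    ← sum_filter_of_ne (p := fun f : Fin q → ℕ => ∀ j, 0 < f j)]
  · refine sum_congr rfl fun f hf => prod_congr rfl fun j _ => ?_
    obtain ⟨k, hk⟩ := Nat.exists_eq_add_of_lt ((mem_filter.1 hf).2 j)
    rw [hk, coeff_succ_X_mul, coeff_mk]
  · intro f _ hne j
    by_contra hj
    exact hne (prod_eq_zero (mem_univ j) (by rw [Nat.eq_zero_of_not_pos hj, coeff_zero_X_mul]))

section CommRing

variable {R : Type*} [CommRing R]

theorem coeff_X_mul_mk_one_pow {q k : ℕ} (hq : 0 < q) (hk : 0 < k) :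
    coeff k ((X * PowerSeries.mk 1 : R⟦X⟧) ^ q) = (k - 1).choose (q - 1) := by
  obtain ⟨d, rfl⟩ := Nat.exists_eq_add_of_lt hq
  rw [mul_pow, coeff_X_pow_mul', mk_one_pow_eq_mk_choose_add]
  split_ifs with h
  · rw [coeff_mk]
    congr 2
    omega
  · rw [Nat.choose_eq_zero_of_lt (by omega), Nat.cast_zero]

theorem one_add_X_mul_mk_one : (1 + X * PowerSeries.mk 1 : R⟦X⟧) = PowerSeries.mk 1 := by
  ext (_ | n)
  · simp
  · simp [coeff_succ_X_mul]

theorem sum_choose_mul_coeff_X_mul_pow (ψ : R⟦X⟧) {s m M : ℕ} (hm : 0 < m) (hmM : m ≤ M) :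
    ∑ q ∈ Icc 1 (min M s), (s.choose q : R) * coeff m ((X * ψ) ^ q) =
      coeff m ((1 + X * ψ) ^ s) := by
  rw [add_comm, add_pow, map_sum]
  simp only [one_pow, mul_one, ← map_natCast (C (R := R)), coeff_mul_C]
  refine sum_subset (fun q hq => ?_) (fun q hqs hq => ?_) |>.trans
    (sum_congr rfl fun q _ => mul_comm _ _)
  · simp only [mem_Icc, mem_range] at hq ⊢
    omega
  · rcases Nat.eq_zero_or_pos q with rfl | hq0
    · simp [coeff_one, hm.ne']
    · rw [mul_pow, coeff_X_pow_mul',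
        if_neg (by simp only [mem_Icc, mem_range] at hq hqs; omega), mul_zero]

theorem sum_Icc_coeff_mk_one_pow (a n : ℕ) :
    ∑ m ∈ Icc 1 n, coeff m (PowerSeries.mk 1 ^ a : R⟦X⟧) = (n + a).choose a - 1 := by
  have hsum : ∑ m ∈ range (n + 1), coeff m (PowerSeries.mk 1 ^ a : R⟦X⟧) = (a + n).choose a :=
    calc ∑ m ∈ range (n + 1), coeff m (PowerSeries.mk 1 ^ a : R⟦X⟧)
        = coeff n (PowerSeries.mk 1 ^ a * PowerSeries.mk 1 : R⟦X⟧) := by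
          rw [coeff_mul, Nat.sum_antidiagonal_eq_sum_range_succ (fun i j => coeff i _ * coeff j _)]
          simp
      _ = (a + n).choose a := by rw [← pow_succ, mk_one_pow_eq_mk_choose_add, coeff_mk]
  rw [Nat.range_succ_eq_Icc_zero, ← insert_Icc_add_one_left_eq_Icc (Nat.zero_le n),
    sum_insert (by simp)] at hsum
  rw [add_comm n, ← hsum]
  simp

end CommRing

theorem card_posAntidiagonalTuple {q k : ℕ} (hq : 0 < q) (hk : 0 < k) :
    #(posAntidiagonalTuple q k) = (k - 1).choose (q - 1) := by
  have h := sum_posAntidiagonalTuple_prod_eq_coeff (fun _ => (1 : ℤ)) q k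
  rw [prod_const_one, sum_const, nsmul_one] at h
  exact_mod_cast h.trans (coeff_X_mul_mk_one_pow hq hk)

theorem card_filter_even_posAntidiagonalTuple {q m : ℕ} (hq : 0 < q) (hm : 0 < m) :
    #{f ∈ posAntidiagonalTuple q m | ∀ j, Even (f j)} =
      if Even m then (m / 2 - 1).choose (q - 1) else 0 := by
  split_ifs with hev
  · obtain ⟨k, rfl⟩ := hev
    rw [show (k + k) / 2 = k by omega, ← card_posAntidiagonalTuple hq (by omega),
      ← card_map (s := posAntidiagonalTuple q k)
        ⟨fun g j => 2 * g j, fun g g' h => funext fun j => by simpa using congrFun h j⟩]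
    congr 1
    ext f
    simp only [mem_filter, mem_map, mem_posAntidiagonalTuple, even_iff_exists_two_mul]
    constructor
    · rintro ⟨⟨hsum, hpos⟩, heven⟩
      choose g hg using heven
      refine ⟨g, ⟨?_, fun j => ?_⟩, funext fun j => (hg j).symm⟩
      · simp only [hg, ← mul_sum] at hsum
        omega
      · have := hpos j
        rw [hg j] at this
        omega
    · rintro ⟨g, ⟨hsum, hpos⟩, rfl⟩
      refine ⟨⟨?_, fun j => ?_⟩, fun j => ⟨g j, rfl⟩⟩
      · change ∑ j, 2 * g j = k + k
        rw [← mul_sum, hsum, two_mul]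
      · change 0 < 2 * g j
        exact Nat.mul_pos two_pos (hpos j)
  · refine card_eq_zero.2 (filter_eq_empty_iff.2 fun f hf heven => hev ?_)
    rw [← (mem_posAntidiagonalTuple.1 hf).1]
    exact even_sum _ fun j _ => heven j

theorem sum_Icc_ite_even {M : Type*} [AddCommMonoid M] (F : ℕ → M) (n : ℕ) :
    ∑ m ∈ Icc 1 n, (if Even m then F m else 0) = ∑ k ∈ Icc 1 (n / 2), F (2 * k) := by
  rw [← sum_filter]
  refine Eq.trans ?_ (sum_map _ ⟨(2 * ·), mul_right_injective₀ two_ne_zero⟩ F)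
  congr 1
  ext m
  simp only [mem_filter, mem_Icc, mem_map, Function.Embedding.coeFn_mk, even_iff_exists_two_mul]
  constructor
  · rintro ⟨_, k, rfl⟩
    exact ⟨k, by omega, rfl⟩
  · rintro ⟨k, _, rfl⟩
    exact ⟨by omega, k, rfl⟩

theorem odd_prod_add_one_iff {ι : Type*} (s : Finset ι) (f : ι → ℕ) :
    Odd (∏ j ∈ s, (f j + 1)) ↔ ∀ j ∈ s, Even (f j) := by
  simp only [← Nat.not_even_iff_odd, even_iff_two_dvd, Nat.prime_two.prime.dvd_finsetProd_iff,
    not_exists, not_and]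
  exact forall₂_congr fun j _ => by omega

theorem floor_half_natCast (N : ℕ) :
    (⌊(1 / 2 : ℚ) * N⌋ : ℚ) = 1 / 2 * N - 1 / 2 * if Odd N then 1 else 0 := by
  rcases Nat.even_or_odd' N with ⟨t, rfl | rfl⟩
  · rw [if_neg (Nat.not_odd_iff_even.2 (even_two_mul t))]
    push_cast
    rw [← mul_assoc, one_div_mul_cancel two_ne_zero, one_mul, Int.floor_natCast]
    simp
  · rw [if_pos (odd_two_mul_add_one t)]
    have : (1 / 2 : ℚ) * ↑(2 * t + 1) = t + 1 / 2 := by push_cast; ring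
    rw [this, Int.floor_natCast_add]
    norm_num

theorem sum_posAntidiagonalTuple_floor_half_prod {q m : ℕ} (hq : 0 < q) (hm : 0 < m) :
    ∑ f ∈ posAntidiagonalTuple q m, (⌊(1 / 2 : ℚ) * ∏ j, ((f j : ℚ) + 1)⌋ : ℚ) =
      1 / 2 * ∑ f ∈ posAntidiagonalTuple q m, ∏ j, ((f j : ℚ) + 1) -
        1 / 2 * if Even m then ((m / 2 - 1).choose (q - 1) : ℚ) else 0 := by
  have hterm (f : Fin q → ℕ) : (⌊(1 / 2 : ℚ) * ∏ j, ((f j : ℚ) + 1)⌋ : ℚ) =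
      1 / 2 * ∏ j, ((f j : ℚ) + 1) - 1 / 2 * if ∀ j, Even (f j) then 1 else 0 := by
    simpa only [odd_prod_add_one_iff, mem_univ, true_imp_iff, Nat.cast_prod, Nat.cast_add,
      Nat.cast_one] using floor_half_natCast (∏ j, (f j + 1))
  rw [sum_congr rfl fun f _ => hterm f, sum_sub_distrib, ← mul_sum, ← mul_sum, sum_boole,
    card_filter_even_posAntidiagonalTuple hq hm]
  push_cast
  rfl

theorem sum_sum_choose_mul_sum_prod_add_one (n s : ℕ) :
    ∑ m ∈ Icc 1 n, ∑ q ∈ Icc 1 (min m s),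
      (s.choose q : ℚ) * ∑ f ∈ posAntidiagonalTuple q m, ∏ j, ((f j : ℚ) + 1) =
      (n + 2 * s).choose (2 * s) - 1 := by
  have hgf : (1 + X * PowerSeries.mk fun k => ((k + 1 : ℕ) : ℚ) + 1) = PowerSeries.mk 1 ^ 2 := by
    rw [mk_one_pow_eq_mk_choose_add]
    ext (_ | k)
    · simp
    · simp [coeff_succ_X_mul]
      ring
  rw [← sum_Icc_coeff_mk_one_pow, pow_mul, ← hgf]
  refine sum_congr rfl fun m hm => ?_
  simp only [sum_posAntidiagonalTuple_prod_eq_coeff (fun k : ℕ => (k : ℚ) + 1)]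
  exact sum_choose_mul_coeff_X_mul_pow _ (mem_Icc.1 hm).1 le_rfl

theorem sum_sum_choose_mul_ite_even (n s : ℕ) :
    ∑ m ∈ Icc 1 n, ∑ q ∈ Icc 1 (min m s),
      (s.choose q : ℚ) * (if Even m then ((m / 2 - 1).choose (q - 1) : ℚ) else 0) =
      (n / 2 + s).choose s - 1 := by
  simp only [mul_ite, mul_zero, sum_ite_irrel, sum_const_zero]
  rw [sum_Icc_ite_even, ← sum_Icc_coeff_mk_one_pow, ← one_add_X_mul_mk_one]
  refine sum_congr rfl fun k hkn => ?_
  have hk : 0 < k := (mem_Icc.1 hkn).1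
  rw [← sum_choose_mul_coeff_X_mul_pow _ hk (by omega : k ≤ 2 * k),
    Nat.mul_div_cancel_left k two_pos]
  refine sum_congr rfl fun q hq => ?_
  rw [coeff_X_mul_mk_one_pow (mem_Icc.1 hq).1 hk]

/-- Theorem 1 of the paper: the number of classes of projectively congruent quadrics
over a local ring with `(1+R*²) ⊂ R*²` equals `T(n,2s) + T(⌊n/2⌋,s)`. -/
theorem quadrics_count_case1 (n s : ℕ) :
    ∑ m ∈ Finset.Icc 1 n, ∑ q ∈ Finset.Icc 1 (min m s),
      (Nat.choose s q : ℚ) *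
        ((if Even m then (Nat.choose (m / 2 - 1) (q - 1) : ℚ) else 0) +
          ∑ f ∈ (Finset.Nat.antidiagonalTuple q m).filter (fun f => ∀ j, 0 < f j),
            (⌊(1 / 2 : ℚ) * ∏ j, ((f j : ℚ) + 1)⌋ : ℚ)) =
      (-(1 / 2) + (1 / 2) * (Nat.choose (n + 2 * s) (2 * s) : ℚ)) +
      (-(1 / 2) + (1 / 2) * (Nat.choose (n / 2 + s) s : ℚ)) := by
  have hterm : ∀ m ∈ Icc 1 n, ∀ q ∈ Icc 1 (min m s),
      (s.choose q : ℚ) * ((if Even m then ((m / 2 - 1).choose (q - 1) : ℚ) else 0) +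
        ∑ f ∈ posAntidiagonalTuple q m, (⌊(1 / 2 : ℚ) * ∏ j, ((f j : ℚ) + 1)⌋ : ℚ)) =
      1 / 2 * ((s.choose q : ℚ) * ∑ f ∈ posAntidiagonalTuple q m, ∏ j, ((f j : ℚ) + 1)) +
        1 / 2 * ((s.choose q : ℚ) * if Even m then ((m / 2 - 1).choose (q - 1) : ℚ) else 0) := by
    intro m hm q hq
    rw [sum_posAntidiagonalTuple_floor_half_prod (mem_Icc.1 hq).1 (mem_Icc.1 hm).1]
    ring
  refine (sum_congr rfl fun m hm => sum_congr rfl (hterm m hm)).trans ?_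
  simp only [sum_add_distrib, ← mul_sum]
  rw [sum_sum_choose_mul_sum_prod_add_one, sum_sum_choose_mul_ite_even]
  ring
end

section
/- For all natural numbers n and s, the following identity holds in ℚ: Σ_{m=1}^{n} Σ_{q=1}^{min(m,s)} C(s,q) · 2^{q−1} · ( ε(m,q) + C(m−1, q−1) ) = S(n,s) + S(⌊n/2⌋,s). -/
open Finset

lemma hockey (n q : ℕ) :
    ∑ m ∈ Icc 1 n, ((m - 1).choose q : ℚ) = (n.choose (q + 1) : ℚ) := by
  induction n with
  | zero => simp
  | succ n ih =>
    rw [Finset.sum_Icc_succ_top (by omega), ih]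
    have : (n + 1 - 1) = n := by omega
    rw [this, Nat.choose_succ_succ n q]
    push_cast
    ring

lemma hockey_even (n q : ℕ) :
    ∑ m ∈ Icc 1 n, (if Even m then ((m / 2 - 1).choose q : ℚ) else 0) =
      ((n / 2).choose (q + 1) : ℚ) := by
  induction n with
  | zero => simp
  | succ n ih =>
    rw [Finset.sum_Icc_succ_top (by omega), ih]
    by_cases h : Even (n + 1)
    · obtain ⟨k, hk⟩ := h
      have h1 : (n + 1) / 2 - 1 = n / 2 := by omega
      have h2 : (n + 1) / 2 = n / 2 + 1 := by omega
      rw [if_pos ⟨k, hk⟩, h1, h2, Nat.choose_succ_succ (n / 2) q]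
      push_cast
      ring
    · have h2 : (n + 1) / 2 = n / 2 := by
        rcases Nat.even_or_odd n with ⟨k, hk⟩ | ⟨k, hk⟩
        · omega
        · exact absurd ⟨k + 1, by omega⟩ h
      rw [if_neg h, h2, add_zero]

/-- Theorem 2 of the paper: the number of classes of projectively congruent quadrics
over a local ring with `R* ∩ (1+R²) ⊄ R*²` equals `S(n,s) + S(⌊n/2⌋,s)`. -/
theorem quadrics_count_case2 (n s : ℕ) :
    ∑ m ∈ Finset.Icc 1 n, ∑ q ∈ Finset.Icc 1 (min m s),
      (Nat.choose s q : ℚ) * (2 : ℚ) ^ ((q : ℤ) - 1) *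
        ((if Even m then (Nat.choose (m / 2 - 1) (q - 1) : ℚ) else 0) +
          (Nat.choose (m - 1) (q - 1) : ℚ)) =
      (-(1 / 2) + ∑ q ∈ Finset.range (s + 1),
          (2 : ℚ) ^ ((q : ℤ) - 1) * (Nat.choose s q : ℚ) * (Nat.choose n q : ℚ)) +
      (-(1 / 2) + ∑ q ∈ Finset.range (s + 1),
          (2 : ℚ) ^ ((q : ℤ) - 1) * (Nat.choose s q : ℚ) * (Nat.choose (n / 2) q : ℚ)) := by
  -- extend inner sums from `Icc 1 (min m s)` to `Icc 1 s`
  have hext : ∀ m ∈ Icc 1 n,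
      (∑ q ∈ Finset.Icc 1 (min m s),
        (Nat.choose s q : ℚ) * (2 : ℚ) ^ ((q : ℤ) - 1) *
          ((if Even m then (Nat.choose (m / 2 - 1) (q - 1) : ℚ) else 0) +
            (Nat.choose (m - 1) (q - 1) : ℚ))) =
      ∑ q ∈ Finset.Icc 1 s,
        (Nat.choose s q : ℚ) * (2 : ℚ) ^ ((q : ℤ) - 1) *
          ((if Even m then (Nat.choose (m / 2 - 1) (q - 1) : ℚ) else 0) +
            (Nat.choose (m - 1) (q - 1) : ℚ)) := by
    intro m hm
    simp only [Finset.mem_Icc] at hm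
    apply Finset.sum_subset
    · exact Finset.Icc_subset_Icc_right (min_le_right m s)
    · intro q hq hq'
      simp only [Finset.mem_Icc] at hq hq'
      have hqm : m < q := by omega
      have e1 : m - 1 < q - 1 := by omega
      have e2 : m / 2 - 1 < q - 1 := by omega
      rw [Nat.choose_eq_zero_of_lt e1, Nat.choose_eq_zero_of_lt e2]
      simp
  rw [Finset.sum_congr rfl hext, Finset.sum_comm]
  -- compute the inner sums over m
  have hmain : ∀ q ∈ Icc 1 s,
      (∑ m ∈ Icc 1 n,
        (Nat.choose s q : ℚ) * (2 : ℚ) ^ ((q : ℤ) - 1) *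
          ((if Even m then (Nat.choose (m / 2 - 1) (q - 1) : ℚ) else 0) +
            (Nat.choose (m - 1) (q - 1) : ℚ))) =
      (Nat.choose s q : ℚ) * (2 : ℚ) ^ ((q : ℤ) - 1) *
        ((Nat.choose (n / 2) q : ℚ) + (Nat.choose n q : ℚ)) := by
    intro q hq
    simp only [Finset.mem_Icc] at hq
    rw [← Finset.mul_sum, Finset.sum_add_distrib]
    have hq1 : q - 1 + 1 = q := by omega
    rw [hockey n (q - 1), hockey_even n (q - 1), hq1]
  rw [Finset.sum_congr rfl hmain]
  -- peel off the q = 0 terms on the RHS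
  rw [Finset.sum_range_succ' (fun q => (2 : ℚ) ^ ((q : ℤ) - 1) * (Nat.choose s q : ℚ) * (Nat.choose n q : ℚ)) s,
      Finset.sum_range_succ' (fun q => (2 : ℚ) ^ ((q : ℤ) - 1) * (Nat.choose s q : ℚ) * (Nat.choose (n / 2) q : ℚ)) s]
  simp only [Nat.cast_zero, Nat.choose_zero_right, Nat.cast_one, mul_one]
  norm_num
  rw [← Finset.Ico_add_one_right_eq_Icc, Finset.sum_Ico_eq_sum_range, ← Finset.sum_add_distrib]
  apply Finset.sum_congr rfl
  intro x hx
  have h1 : 1 + x = x + 1 := by omega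
  have h2 : ((x + 1 : ℕ) : ℤ) - 1 = (x : ℤ) := by push_cast; ring
  rw [h1, h2, zpow_natCast]
  ring
end

section
/- Fix a natural number s ≥ 1. Then (S(n,s) + 1/2)·s!/(2^{s−1}·n^s) tends to 1 as n → ∞; equivalently, the function n ↦ S(n,s) + 1/2 is asymptotically equivalent to n ↦ 2^{s−1}·n^s/s! as n → ∞. -/
/-!
`S(n,s) + 1/2 = ∑_{q ≤ s} 2^(q-1) C(s,q) C(n,q)`, and `C(n,q) ~ n^q / q!` as `n → ∞`;
after dividing by `n^s` every term with `q < s` vanishes and only `q = s` survives,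
leaving `2^(s-1) / s!`.
-/

open Asymptotics Filter Finset Topology

lemma tendsto_choose_div_pow_self (k : ℕ) :
    Tendsto (fun n : ℕ => (n.choose k : ℝ) / (n : ℝ) ^ k) atTop (𝓝 (1 / k.factorial)) := by
  have hequiv := (isEquivalent_choose k).div (IsEquivalent.refl (u := fun n : ℕ => (n : ℝ) ^ k))
  refine hequiv.symm.tendsto_nhds (tendsto_const_nhds.congr' ?_)
  filter_upwards [eventually_gt_atTop 0] with n hn
  have : (n : ℝ) ^ k ≠ 0 := by positivity
  simp only [Pi.div_apply]
  field_simp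

lemma tendsto_choose_div_pow_of_lt {q s : ℕ} (h : q < s) :
    Tendsto (fun n : ℕ => (n.choose q : ℝ) / (n : ℝ) ^ s) atTop (𝓝 0) :=
  ((isTheta_choose q).trans_isLittleO
    ((isLittleO_pow_pow_atTop_of_lt h).comp_tendsto tendsto_natCast_atTop_atTop)).tendsto_div_nhds_zero

lemma tendsto_sum_mul_choose_div_pow (a : ℕ → ℝ) (s : ℕ) :
    Tendsto (fun n : ℕ => (∑ q ∈ range (s + 1), a q * n.choose q) / (n : ℝ) ^ s) atTop
      (𝓝 (a s / s.factorial)) := by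
  have hlower : Tendsto (fun n : ℕ => ∑ q ∈ range s, a q * ((n.choose q : ℝ) / (n : ℝ) ^ s))
      atTop (𝓝 0) := by
    simpa using tendsto_finsetSum (range s) fun q hq =>
      (tendsto_choose_div_pow_of_lt (mem_range.mp hq)).const_mul (a q)
  have htop := (tendsto_choose_div_pow_self s).const_mul (a s)
  have hboth := hlower.add htop
  rw [zero_add, mul_one_div] at hboth
  refine hboth.congr fun n => ?_
  simp only [sum_range_succ, add_div, sum_div, mul_div_assoc]

theorem S_asymptotic_general (s : ℕ) :
    Filter.Tendsto
      (fun n : ℕ =>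
        ((-(1 / 2 : ℝ) + ∑ q ∈ Finset.range (s + 1),
            (2 : ℝ) ^ ((q : ℤ) - 1) * (Nat.choose s q : ℝ) * (Nat.choose n q : ℝ)) + 1 / 2) *
          (Nat.factorial s : ℝ) / ((2 : ℝ) ^ ((s : ℤ) - 1) * (n : ℝ) ^ s))
      Filter.atTop (nhds 1) := by
  have hsum := (tendsto_sum_mul_choose_div_pow
    (fun q => (2 : ℝ) ^ ((q : ℤ) - 1) * (s.choose q : ℝ)) s).mul_const
    ((s.factorial : ℝ) / (2 : ℝ) ^ ((s : ℤ) - 1))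
  have hlimit : (2 : ℝ) ^ ((s : ℤ) - 1) * (s.choose s : ℝ) / s.factorial *
      (s.factorial / (2 : ℝ) ^ ((s : ℤ) - 1)) = 1 := by
    rw [Nat.choose_self, Nat.cast_one]
    field_simp
  rw [hlimit] at hsum
  refine hsum.congr fun n => ?_
  rw [neg_add_cancel_comm]
  ring

/-- Formula (assym1) of the paper's Theorem 2: for fixed `s ≥ 1`,
`S(n,s) + 1/2 ∼ 2^(s-1) n^s / s!` as `n → ∞`. -/
theorem S_asymptotic (s : ℕ) (hs : 1 ≤ s) :
    Filter.Tendsto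
      (fun n : ℕ =>
        ((-(1 / 2 : ℝ) + ∑ q ∈ Finset.range (s + 1),
            (2 : ℝ) ^ ((q : ℤ) - 1) * (Nat.choose s q : ℝ) * (Nat.choose n q : ℝ)) + 1 / 2) *
          (Nat.factorial s : ℝ) / ((2 : ℝ) ^ ((s : ℤ) - 1) * (n : ℝ) ^ s))
      Filter.atTop (nhds 1) :=
  S_asymptotic_general s
end

section
/- For every natural number n ≥ 1, Σ_{i=1}^{n} Σ_{j=1}^{n} C(n−i+j−1, j−1) · C(i−1+n−j, i−1) = (2n−1) · C(2n−2, n−1). -/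
/-!
For fixed `i`, the inner sum is the coefficient of `X^(n-1)` in
`(1 - X)^-(n-i+1) · (1 - X)^-i = (1 - X)^-(n+1)`, namely `C(2n-1, n)`, whatever `i` is.
Hence `Ω(n) = n · C(2n-1, n) = (2n-1) · C(2n-2, n-1)`.
-/

open Finset PowerSeries

theorem Nat.sum_antidiagonal_add_choose_mul_add_choose (p q N : ℕ) :
    ∑ ij ∈ antidiagonal N, (p + ij.1).choose p * (q + ij.2).choose q =
      (p + q + 1 + N).choose (p + q + 1) := by
  have h := congrArg (coeff N) (pow_add (mk 1 : ℤ⟦X⟧) (p + 1) (q + 1))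
  rw [← add_assoc, mk_one_pow_eq_mk_choose_add, mk_one_pow_eq_mk_choose_add,
    mk_one_pow_eq_mk_choose_add, coeff_mul, coeff_mk, add_right_comm p] at h
  simp only [coeff_mk] at h
  exact_mod_cast h.symm

theorem Nat.sum_range_add_choose_mul_add_choose (p q N : ℕ) :
    ∑ k ∈ range (N + 1), (p + k).choose p * (q + (N - k)).choose q =
      (p + q + 1 + N).choose (p + q + 1) := by
  rw [← Nat.sum_antidiagonal_add_choose_mul_add_choose,
    Nat.sum_antidiagonal_eq_sum_range_succ_mk]

theorem sum_Icc_choose_mul_choose_eq {n i : ℕ} (hi : i ∈ Icc 1 n) :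
    ∑ j ∈ Icc 1 n, (n - i + j - 1).choose (j - 1) * (i - 1 + n - j).choose (i - 1) =
      (2 * n - 1).choose n := by
  obtain ⟨hi1, hin⟩ := mem_Icc.mp hi
  have h := Nat.sum_range_add_choose_mul_add_choose (n - i) (i - 1) (n - 1)
  rw [show n - i + (i - 1) + 1 = n by omega, show n + (n - 1) = 2 * n - 1 by omega] at h
  rw [← h, ← Ico_add_one_right_eq_Icc, sum_Ico_eq_sum_range,
    show n + 1 - 1 = n - 1 + 1 by omega]
  refine sum_congr rfl fun k hk => ?_
  have hkn := mem_range.mp hk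
  rw [Nat.choose_symm_add, show n - i + (1 + k) - 1 = n - i + k by omega,
    show 1 + k - 1 = k by omega, show i - 1 + n - (1 + k) = i - 1 + (n - 1 - k) by omega]

/-- Theorem 3 of the paper: the number of all ideals of the ring `R_n(K,J)` is
`Ω(n) = (2n-1)·C(2n-2, n-1)`. -/
theorem ideals_count (n : ℕ) (hn : 1 ≤ n) :
    ∑ i ∈ Finset.Icc 1 n, ∑ j ∈ Finset.Icc 1 n,
      Nat.choose (n - i + j - 1) (j - 1) * Nat.choose (i - 1 + n - j) (i - 1) =
      (2 * n - 1) * Nat.choose (2 * n - 2) (n - 1) := by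
  have h := Nat.add_one_mul_choose_eq (2 * n - 2) (n - 1)
  rw [show 2 * n - 2 + 1 = 2 * n - 1 by omega, show n - 1 + 1 = n by omega] at h
  rw [sum_congr rfl fun i hi => sum_Icc_choose_mul_choose_eq hi, sum_const, Nat.card_Icc,
    smul_eq_mul, Nat.add_sub_cancel, h, mul_comm]
end

section
/- For every natural number n ≥ 3, the following identity holds in ℚ: T₁(n) + T₂(n) + T₃(n) = 2^{2n−1} + (n−1)·C(2n−2, n−1) − (4/n)·C(2n, n−2) − C(2n, n), where T₁(n) = Σ_{i=2}^{n} Σ_{j=1}^{i−1} C(n−i+j−1, j−1)·C(i−1+n−j, i−1), T₂(n) = Σ_{i=2}^{n} Σ_{j=i}^{n−1} C(i−1+n−j, i−1)·( C(n−i+j, j) − C(n−i+j, j+1) ), and T₃(n) = Σ_{i=2}^{n} Σ_{j=i}^{n} ( Σ_{s=0}^{j−i+1} C(i−1+n−j, i−1)·C(i−1+n−j, s+i)·C(2j−2i, j−i−s+1) − Σ_{s=0}^{j−i−3} C(i−1+n−j, i−1)·C(i−1+n−j, s+i)·C(2j−2i, j−i−s−3) ), inner sums over s being empty when their upper bound is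 negative. -/
/-!
After reindexing, the inner sums of `T₁` and `T₂` are Chu–Vandermonde convolutions and the outer
sums are hockey-stick sums. In `T₃`, the sum over `i` is again a Vandermonde convolution, up to a
boundary term whose contribution is a hockey-stick sum. What remains is a convolution of shifted
central binomial coefficients, `∑_{a+d=m} C(2a, a+i) C(2d, d+k)`, which equals the partial row sum
`∑_{r ≤ m-|i|-|k|} C(2m+1, r)` (induction on `m` through Pascal's rule applied twice); the sum
over `t` then telescopes to twice one such partial sum, that is `4^(n-1)` minus two binomial
coefficients. Finally all binomial coefficients are expressed through `C(2n-2, n-1)`.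
-/

open Finset

/-- For this extension of `Nat.choose` to integer lower indices, symmetry and Pascal's rule hold
without side conditions. -/
def intChoose (a : ℕ) : ℤ → ℚ
  | .ofNat b => a.choose b
  | .negSucc _ => 0

namespace intChoose

@[simp]
lemma natCast (a b : ℕ) : intChoose a b = a.choose b := rfl

lemma zero_right (a : ℕ) : intChoose a 0 = 1 := by
  simpa using natCast a 0

lemma of_neg {a : ℕ} {b : ℤ} (hb : b < 0) : intChoose a b = 0 := by
  cases b with
  | ofNat b => exact absurd hb (by simp)
  | negSucc => rfl

lemma of_lt {a : ℕ} {b : ℤ} (hb : (a : ℤ) < b) : intChoose a b = 0 := by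
  lift b to ℕ using by omega
  simp [Nat.choose_eq_zero_of_lt (by omega : a < b)]

lemma zero_left (b : ℤ) : intChoose 0 b = if b = 0 then 1 else 0 := by
  split_ifs with hb
  · rw [hb, zero_right]
  rcases lt_or_gt_of_ne hb with hb | hb
  · exact of_neg hb
  · exact of_lt (by simpa using hb)

lemma symm (a : ℕ) (b : ℤ) : intChoose a (a - b) = intChoose a b := by
  rcases lt_or_ge b 0 with hb | hb
  · rw [of_neg hb, of_lt (by omega)]
  rcases lt_or_ge (a : ℤ) b with hab | hab
  · rw [of_neg (by omega), of_lt hab]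
  lift b to ℕ using hb
  rw [← Nat.cast_sub (by omega), natCast, natCast, Nat.choose_symm (by omega)]

lemma succ (a : ℕ) (b : ℤ) : intChoose (a + 1) b = intChoose a (b - 1) + intChoose a b := by
  rcases lt_or_ge b 1 with hb | hb
  · rcases lt_or_ge b 0 with hb' | hb'
    · simp [of_neg hb', of_neg (by omega : b - 1 < 0)]
    · obtain rfl : b = 0 := by omega
      simp [zero_right, of_neg]
  lift b to ℕ using by omega
  obtain ⟨c, rfl⟩ : ∃ c, b = c + 1 := ⟨b - 1, by omega⟩
  rw [show ((c + 1 : ℕ) : ℤ) - 1 = c by push_cast; ring, natCast, natCast, natCast,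
    Nat.choose_succ_succ, Nat.cast_add]

lemma two_mul_add (m : ℕ) (k : ℤ) : intChoose (2 * m) (m + k) = (2 * m).choose (m + k.natAbs) := by
  rcases le_or_gt 0 k with hk | hk
  · rw [show (m + k : ℤ) = (m + k.natAbs : ℕ) by omega, natCast]
  · rw [← symm, show ((2 * m : ℕ) : ℤ) - (m + k) = (m + k.natAbs : ℕ) by omega, natCast]

lemma add_two (a : ℕ) (b : ℤ) :
    intChoose (a + 2) b = intChoose a (b - 2) + 2 * intChoose a (b - 1) + intChoose a b := by
  rw [succ, succ, succ, show b - 1 - 1 = b - 2 by ring]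
  ring

end intChoose

theorem sum_range_intChoose_mul (p q : ℕ) (k : ℤ) :
    ∑ x ∈ range (p + 1), intChoose p x * intChoose q (k - x) = intChoose (p + q) k := by
  induction p generalizing k with
  | zero => simp
  | succ p ih =>
    have shifted : ∑ x ∈ range (p + 2), intChoose p (x - 1) * intChoose q (k - x) =
        intChoose (p + q) (k - 1) := by
      rw [sum_range_succ', ← ih]
      simp [intChoose.of_neg, sub_sub, add_comm]
    have padded : ∑ x ∈ range (p + 2), intChoose p x * intChoose q (k - x) =
        intChoose (p + q) k := by
      rw [sum_range_succ, ih, intChoose.of_lt (a := p) (b := (p + 1 : ℕ)) (by omega), zero_mul,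
        add_zero]
    simp only [intChoose.succ, add_mul, sum_add_distrib, shifted, padded,
      show p + 1 + q = p + q + 1 by ring]

theorem sum_range_intChoose_mul_of_lt {p L : ℕ} (hp : p < L) (q : ℕ) (k : ℤ) :
    ∑ x ∈ range L, intChoose p x * intChoose q (k - x) = intChoose (p + q) k := by
  rw [← sum_range_intChoose_mul p q k]
  refine (sum_subset (range_subset_range.2 hp) fun x hxL hxp ↦ ?_).symm
  rw [intChoose.of_lt (by simp at hxL hxp; omega), zero_mul]

theorem sum_range_intChoose_mul_add {p L : ℕ} (hp : p < L) (q : ℕ) (c : ℤ) :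
    ∑ x ∈ range L, intChoose p x * intChoose q (c + x) = intChoose (p + q) (p + c) := by
  simp_rw [← intChoose.symm q (c + _), ← intChoose.symm (p + q) (p + c),
    show ∀ x : ℤ, (q : ℤ) - (c + x) = q - c - x by intro x; ring]
  rw [sum_range_intChoose_mul_of_lt hp]
  congr 1
  push_cast
  ring

theorem sum_range_choose_mul_choose_add {p L : ℕ} (hp : p < L) (q c : ℕ) :
    ∑ x ∈ range L, (p.choose x : ℚ) * q.choose (c + x) = (p + q).choose (p + c) := by
  simpa only [← Nat.cast_add, intChoose.natCast] using sum_range_intChoose_mul_add hp q c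

theorem sum_Icc_choose_mul_choose_add (p q c : ℕ) :
    ∑ x ∈ Icc 1 p, (p.choose x : ℚ) * q.choose (c + x) = (p + q).choose (p + c) - q.choose c := by
  rw [← sum_range_choose_mul_choose_add (Nat.lt_succ_self p), range_eq_Ico,
    sum_eq_sum_Ico_succ_bot (Nat.succ_pos p)]
  simp [Ico_add_one_right_eq_Icc]

theorem sum_Icc_choose_succ_mul_choose_add (p q c : ℕ) :
    ∑ x ∈ Icc 1 p, ((p + 1).choose x : ℚ) * q.choose (c + x) =
      (p + 1 + q).choose (p + 1 + c) - q.choose c - q.choose (c + (p + 1)) := by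
  rw [← sum_Icc_choose_mul_choose_add, sum_Icc_succ_top (by omega), Nat.choose_self]
  ring

theorem sum_range_choose_succ_mul_intChoose {p L : ℕ} (hp : p ≤ L) (q : ℕ) (k : ℤ) :
    ∑ t ∈ range L, (p.choose (t + 1) : ℚ) * intChoose q (k - 1 - t) =
      intChoose (p + q) k - intChoose q k := by
  rw [← sum_range_intChoose_mul_of_lt (Nat.lt_succ_of_le hp), sum_range_succ']
  simp only [Nat.cast_zero, intChoose.zero_right, sub_zero, one_mul, add_sub_cancel_right]
  refine sum_congr rfl fun t _ ↦ ?_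
  rw [sub_sub, add_comm 1, ← Nat.cast_add_one, intChoose.natCast]

theorem sum_range_choose_eq_choose_succ (b r : ℕ) :
    ∑ q ∈ range b, (q.choose r : ℚ) = b.choose (r + 1) := by
  induction b with
  | zero => simp
  | succ b ih => rw [sum_range_succ, ih, Nat.choose_succ_succ', Nat.cast_add, add_comm]

theorem sum_Ico_choose_eq_sub {a b : ℕ} (hab : a ≤ b) (r : ℕ) :
    ∑ q ∈ Ico a b, (q.choose r : ℚ) = b.choose (r + 1) - a.choose (r + 1) := by
  rw [sum_Ico_eq_sub _ hab, sum_range_choose_eq_choose_succ, sum_range_choose_eq_choose_succ]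

theorem Finset.sum_sum_nbij' {ι κ α β M : Type*} [AddCommMonoid M] {s : Finset ι}
    {t : ι → Finset κ} {s' : Finset α} {t' : α → Finset β} {f : ι → κ → M} {g : α → β → M}
    (i : ι → κ → α) (j : ι → κ → β) (i' : α → β → ι) (j' : α → β → κ)
    (hi : ∀ a ∈ s, ∀ b ∈ t a, i a b ∈ s' ∧ j a b ∈ t' (i a b))
    (hi' : ∀ c ∈ s', ∀ d ∈ t' c, i' c d ∈ s ∧ j' c d ∈ t (i' c d))
    (left_inv : ∀ a ∈ s, ∀ b ∈ t a, i' (i a b) (j a b) = a ∧ j' (i a b) (j a b) = b)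
    (right_inv : ∀ c ∈ s', ∀ d ∈ t' c, i (i' c d) (j' c d) = c ∧ j (i' c d) (j' c d) = d)
    (h : ∀ a ∈ s, ∀ b ∈ t a, f a b = g (i a b) (j a b)) :
    ∑ a ∈ s, ∑ b ∈ t a, f a b = ∑ c ∈ s', ∑ d ∈ t' c, g c d := by
  rw [sum_sigma', sum_sigma']
  refine sum_nbij' (fun p ↦ ⟨i p.1 p.2, j p.1 p.2⟩) (fun p ↦ ⟨i' p.1 p.2, j' p.1 p.2⟩)
    ?_ ?_ ?_ ?_ ?_
  · rintro ⟨a, b⟩ hab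
    simp only [mem_sigma] at hab ⊢
    exact hi a hab.1 b hab.2
  · rintro ⟨c, d⟩ hcd
    simp only [mem_sigma] at hcd ⊢
    exact hi' c hcd.1 d hcd.2
  · rintro ⟨a, b⟩ hab
    simp only [mem_sigma] at hab
    obtain ⟨h1, h2⟩ := left_inv a hab.1 b hab.2
    simp [h1, h2]
  · rintro ⟨c, d⟩ hcd
    simp only [mem_sigma] at hcd
    obtain ⟨h1, h2⟩ := right_inv c hcd.1 d hcd.2
    simp [h1, h2]
  · rintro ⟨a, b⟩ hab
    simp only [mem_sigma] at hab
    exact h a hab.1 b hab.2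

def rowSum (a R : ℕ) : ℚ := ∑ r ∈ range R, (a.choose r : ℚ)

lemma sum_range_intChoose_sub (a R s : ℕ) :
    ∑ r ∈ range R, intChoose a (r - s) = rowSum a (R - s) := by
  rcases le_or_gt R s with h | h
  · rw [Nat.sub_eq_zero_of_le h, rowSum, range_zero, sum_empty]
    exact sum_eq_zero fun r hr ↦ intChoose.of_neg (by simp at hr; omega)
  · obtain ⟨R, rfl⟩ := Nat.exists_eq_add_of_lt h
    rw [show s + R + 1 = s + (R + 1) by ring, sum_range_add, Nat.add_sub_cancel_left, rowSum]
    rw [sum_eq_zero fun r hr ↦ intChoose.of_neg (by simp at hr; omega), zero_add]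
    simp

lemma rowSum_add_two (a R : ℕ) :
    rowSum (a + 2) R = rowSum a (R - 2) + 2 * rowSum a (R - 1) + rowSum a R := by
  have h := sum_range_intChoose_sub (a + 2) R 0
  simp only [intChoose.add_two, sum_add_distrib, ← mul_sum, Nat.cast_zero, sub_zero,
    Nat.sub_zero] at h
  rw [← h, ← sum_range_intChoose_sub a R 2, ← sum_range_intChoose_sub a R 1, rowSum]
  simp

lemma rowSum_odd_sub_add_two (m k : ℕ) :
    rowSum (2 * m + 1) (m + 2 - k) =
      rowSum (2 * m + 1) (m - k) + (2 * m + 2).choose (m + 1 + k) := by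
  rcases lt_trichotomy k (m + 1) with h | rfl | h
  · rw [show m + 2 - k = m - k + 1 + 1 by omega, rowSum, rowSum, sum_range_succ, sum_range_succ,
      Nat.choose_symm_of_eq_add (by omega : 2 * m + 2 = m + 1 + k + (m - k + 1)),
      show 2 * m + 2 = 2 * m + 1 + 1 by ring, Nat.choose_succ_succ' (2 * m + 1) (m - k),
      Nat.cast_add]
    ring
  · simp [rowSum, show m + 1 + (m + 1) = 2 * m + 2 by ring]
  · rw [Nat.sub_eq_zero_of_le (by omega), Nat.sub_eq_zero_of_le (by omega),
      Nat.choose_eq_zero_of_lt (by omega)]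
    simp

def centralConv (m : ℕ) (i k : ℤ) : ℚ :=
  ∑ p ∈ antidiagonal m, intChoose (2 * p.1) (p.1 + i) * intChoose (2 * p.2) (p.2 + k)

lemma centralConv_succ (m : ℕ) (i k : ℤ) :
    centralConv (m + 1) i k = centralConv m (i - 1) k + 2 * centralConv m i k +
      centralConv m (i + 1) k + intChoose 0 i * intChoose (2 * (m + 1)) ((m + 1 : ℕ) + k) := by
  simp only [centralConv, Nat.sum_antidiagonal_succ, mul_sum, ← sum_add_distrib]
  rw [add_comm]
  congr 1
  · refine sum_congr rfl fun p _ ↦ ?_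
    rw [show 2 * (p.1 + 1) = 2 * p.1 + 2 by ring, intChoose.add_two]
    push_cast
    ring_nf
  · simp

theorem centralConv_eq_rowSum (m : ℕ) (i k : ℤ) :
    centralConv m i k = rowSum (2 * m + 1) (m + 1 - (i.natAbs + k.natAbs)) := by
  induction m generalizing i with
  | zero =>
    by_cases h : i = 0 ∧ k = 0
    · simp [centralConv, h, rowSum]
    · rw [centralConv, Nat.antidiagonal_zero, sum_singleton, Nat.sub_eq_zero_of_le (by omega)]
      simp [intChoose.zero_left, rowSum]
      tauto
  | succ m ih =>
    rw [centralConv_succ, ih, ih, ih, intChoose.zero_left,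
      show 2 * (m + 1) + 1 = 2 * m + 1 + 2 by ring, rowSum_add_two]
    rcases eq_or_ne i 0 with rfl | h
    · rw [if_pos rfl, one_mul, intChoose.two_mul_add, show 2 * (m + 1) = 2 * m + 2 by ring,
        show m + 1 + 1 = m + 2 by ring, rowSum_odd_sub_add_two]
      simp only [zero_sub, Int.natAbs_neg, Int.natAbs_one, Int.natAbs_zero, zero_add]
      rw [show m + 2 - k.natAbs - 2 = m + 1 - (1 + k.natAbs) by omega,
        show m + 2 - k.natAbs - 1 = m + 1 - k.natAbs by omega,
        show m - k.natAbs = m + 1 - (1 + k.natAbs) by omega]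
      ring
    · obtain ⟨s, hs⟩ : ∃ s, i.natAbs + k.natAbs = s + 1 :=
        ⟨_, (Nat.succ_pred_eq_of_pos (by omega)).symm⟩
      have : ((i - 1).natAbs + k.natAbs = s ∧ (i + 1).natAbs + k.natAbs = s + 2) ∨
          ((i - 1).natAbs + k.natAbs = s + 2 ∧ (i + 1).natAbs + k.natAbs = s) := by omega
      rcases this with ⟨h₁, h₂⟩ | ⟨h₁, h₂⟩ <;>
        rw [if_neg h, zero_mul, add_zero, hs, h₁, h₂,
          show m + 1 + 1 - (s + 1) - 2 = m + 1 - (s + 2) by omega,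
          show m + 1 + 1 - (s + 1) - 1 = m + 1 - (s + 1) by omega,
          show m + 1 + 1 - (s + 1) = m + 1 - s by omega]
      ring

lemma sum_range_centralConv_sub (m L : ℕ) :
    ∑ t ∈ range (L + 1), (centralConv m (1 - t) (1 + t) - centralConv m (-3 - t) (1 + t)) =
      2 * rowSum (2 * m + 1) (m - 1) - rowSum (2 * m + 1) (m - 1 - 2 * L) -
        rowSum (2 * m + 1) (m - 3 - 2 * L) := by
  induction L with
  | zero =>
    simp only [zero_add, range_one, sum_singleton, centralConv_eq_rowSum]
    norm_num [show m + 1 - 2 = m - 1 by omega, show m + 1 - 4 = m - 3 by omega]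
    ring
  | succ L ih =>
    rw [sum_range_succ, ih, centralConv_eq_rowSum, centralConv_eq_rowSum,
      show (1 - ((L + 1 : ℕ) : ℤ)).natAbs + (1 + ((L + 1 : ℕ) : ℤ)).natAbs = 2 * L + 2 by omega,
      show (-3 - ((L + 1 : ℕ) : ℤ)).natAbs + (1 + ((L + 1 : ℕ) : ℤ)).natAbs = 2 * L + 6 by omega,
      show m + 1 - (2 * L + 2) = m - 1 - 2 * L by omega,
      show m + 1 - (2 * L + 6) = m - 3 - 2 * (L + 1) by omega,
      show m - 3 - 2 * L = m - 1 - 2 * (L + 1) by omega]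
    ring

def T₁ (n : ℕ) : ℚ :=
  ∑ i ∈ Icc 2 n, ∑ j ∈ Icc 1 (i - 1),
    (Nat.choose (n - i + j - 1) (j - 1) : ℚ) * (Nat.choose (i - 1 + n - j) (i - 1) : ℚ)

def T₂ (n : ℕ) : ℚ :=
  ∑ i ∈ Icc 2 n, ∑ j ∈ Icc i (n - 1),
    (Nat.choose (i - 1 + n - j) (i - 1) : ℚ) *
      ((Nat.choose (n - i + j) j : ℚ) - (Nat.choose (n - i + j) (j + 1) : ℚ))

def T₃ (n : ℕ) : ℚ :=
  ∑ i ∈ Icc 2 n, ∑ j ∈ Icc i n,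
    ((∑ t ∈ range (j - i + 2),
        (Nat.choose (i - 1 + n - j) (i - 1) : ℚ) * (Nat.choose (i - 1 + n - j) (t + i) : ℚ) *
          (Nat.choose (2 * (j - i)) (j - i + 1 - t) : ℚ)) -
      (∑ t ∈ range (j - i - 2),
        (Nat.choose (i - 1 + n - j) (i - 1) : ℚ) * (Nat.choose (i - 1 + n - j) (t + i) : ℚ) *
          (Nat.choose (2 * (j - i)) (j - i - 3 - t) : ℚ)))

theorem T₁_eq (n : ℕ) : T₁ n = (n - 1 : ℕ) * ((2 * n - 2).choose (n - 1) : ℚ) := by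
  calc T₁ n = ∑ k ∈ Icc 1 (n - 1), ∑ x ∈ range (n - k),
        ((n - 1 - k).choose x : ℚ) * (n - 1 + k).choose (k + x) := by
        refine Finset.sum_sum_nbij' (fun i j ↦ i - j) (fun _ j ↦ j - 1) (fun k x ↦ x + 1 + k)
          (fun _ x ↦ x + 1) ?_ ?_ ?_ ?_ ?_ <;> intro a ha b hb <;>
          simp only [mem_Icc, mem_range] at ha hb ⊢
        any_goals omega
        rw [show n - a + b - 1 = n - 1 - (a - b) by omega,
          show a - 1 + n - b = n - 1 + (a - b) by omega, show a - b + (b - 1) = a - 1 by omega]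
    _ = ∑ k ∈ Icc 1 (n - 1), ((2 * n - 2).choose (n - 1) : ℚ) := by
        refine sum_congr rfl fun k hk ↦ ?_
        simp only [mem_Icc] at hk
        rw [sum_range_choose_mul_choose_add (by omega),
          show n - 1 - k + (n - 1 + k) = 2 * n - 2 by omega, show n - 1 - k + k = n - 1 by omega]
    _ = _ := by simp

theorem T₂_eq (n : ℕ) (hn : 2 ≤ n) :
    T₂ n =
      (n - 2 : ℕ) * ((Nat.choose (2 * n - 1) n : ℚ) - Nat.choose (2 * n - 1) (n + 1)) +
        Nat.choose (2 * n - 2) (n - 1) - Nat.choose (2 * n - 2) n -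
        Nat.choose (2 * n - 2) (n + 1) + Nat.choose (2 * n - 2) (n + 2) - n + 1 := by
  calc T₂ n = ∑ q ∈ Icc n (2 * n - 3), ∑ a ∈ Icc 1 (2 * n - 2 - q),
        ((2 * n - 2 - q + 1).choose a : ℚ) *
          (q.choose (q + 1 - n + a) - q.choose (q + 2 - n + a)) := by
        refine Finset.sum_sum_nbij' (fun i j ↦ n - i + j) (fun i _ ↦ i - 1)
          (fun _ a ↦ a + 1) (fun q a ↦ q - n + a + 1) ?_ ?_ ?_ ?_ ?_ <;> intro a ha b hb <;>
          simp only [mem_Icc] at ha hb ⊢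
        any_goals omega
        rw [show n - a + b + 1 - n + (a - 1) = b by omega,
          show n - a + b + 2 - n + (a - 1) = b + 1 by omega,
          show 2 * n - 2 - (n - a + b) + 1 = a - 1 + n - b by omega]
    _ = ∑ q ∈ Icc n (2 * n - 3), (((2 * n - 1).choose n : ℚ) - (2 * n - 1).choose (n + 1)
          - q.choose (n - 1) - q.choose n + q.choose (n - 2) + q.choose (n + 1)) := by
        refine sum_congr rfl fun q hq ↦ ?_
        simp only [mem_Icc] at hq
        simp only [mul_sub, sum_sub_distrib, sum_Icc_choose_succ_mul_choose_add]
        rw [show 2 * n - 2 - q + 1 + q = 2 * n - 1 by omega,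
          show 2 * n - 2 - q + 1 + (q + 1 - n) = n by omega,
          show 2 * n - 2 - q + 1 + (q + 2 - n) = n + 1 by omega,
          show q + 1 - n + (2 * n - 2 - q + 1) = n by omega,
          show q + 2 - n + (2 * n - 2 - q + 1) = n + 1 by omega,
          Nat.choose_symm_of_eq_add (by omega : q = q + 1 - n + (n - 1)),
          Nat.choose_symm_of_eq_add (by omega : q = q + 2 - n + (n - 2))]
        ring
    _ = _ := by
        rw [show Icc n (2 * n - 3) = Ico n (2 * n - 2) by ext; simp; omega]
        simp only [sum_add_distrib, sum_sub_distrib, sum_const, Nat.card_Ico,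
          sum_Ico_choose_eq_sub (by omega : n ≤ 2 * n - 2), nsmul_eq_mul]
        rw [show n - 1 + 1 = n by omega, show n - 2 + 1 = n - 1 by omega, Nat.choose_self,
          Nat.choose_symm_of_eq_add (by omega : n = n - 1 + 1), Nat.choose_one_right,
          Nat.choose_eq_zero_of_lt (by omega : n < n + 1 + 1),
          Nat.choose_eq_zero_of_lt (by omega : n < n + 1), show 2 * n - 2 - n = n - 2 by omega]
        ring

lemma sum_range_mul_choose_eq_sum_range_mul_intChoose (a c : ℕ) (f : ℕ → ℚ) {L : ℕ} (hL : c < L) :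
    ∑ t ∈ range (c + 1), f t * a.choose (c - t) = ∑ t ∈ range L, f t * intChoose a (c - t) := by
  rw [← sum_subset (range_subset_range.2 hL) fun t _ ht ↦ by
    rw [intChoose.of_neg (by simp at ht; omega), mul_zero]]
  refine sum_congr rfl fun t ht ↦ ?_
  rw [← Nat.cast_sub (by simp at ht; omega), intChoose.natCast]

def centralBracket (e t : ℕ) : ℚ :=
  intChoose (2 * e) (e + (1 - t)) - intChoose (2 * e) (e + (-3 - t))

lemma sum_sub_sum_eq_sum_mul_centralBracket (e : ℕ) (f : ℕ → ℚ) {L : ℕ} (hL : e + 2 ≤ L) :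
    ∑ t ∈ range (e + 2), f t * (2 * e).choose (e + 1 - t) -
        ∑ t ∈ range (e - 2), f t * (2 * e).choose (e - 3 - t) =
      ∑ t ∈ range L, f t * centralBracket e t := by
  have upper := sum_range_mul_choose_eq_sum_range_mul_intChoose (2 * e) (e + 1) f (L := L)
    (by omega)
  have lower : ∑ t ∈ range (e - 2), f t * (2 * e).choose (e - 3 - t) =
      ∑ t ∈ range L, f t * intChoose (2 * e) ((e - 3 : ℤ) - t) := by
    rcases le_or_gt 3 e with he | he
    · rw [show e - 2 = e - 3 + 1 by omega,
        sum_range_mul_choose_eq_sum_range_mul_intChoose _ _ _ (L := L) (by omega)]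
      push_cast [he]
      rfl
    · rw [show e - 2 = 0 by omega, sum_range_zero]
      exact (sum_eq_zero fun t _ ↦ by rw [intChoose.of_neg (by omega), mul_zero]).symm
  rw [upper, lower, ← sum_sub_distrib]
  refine sum_congr rfl fun t _ ↦ ?_
  rw [centralBracket, mul_sub]
  congr 3 <;> push_cast <;> ring

theorem T₃_eq_sum_antidiagonal (n : ℕ) :
    T₃ n =
      ∑ p ∈ antidiagonal (n - 1), ∑ x ∈ Icc 1 p.2, ∑ t ∈ range n,
        (p.2.choose x : ℚ) * p.2.choose (t + 1 + x) * centralBracket p.1 t := by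
  refine Finset.sum_sum_nbij' (fun i j ↦ (j - i, n - 1 - (j - i))) (fun i _ ↦ i - 1)
    (fun _ x ↦ x + 1) (fun p x ↦ x + 1 + p.1) ?_ ?_ ?_ ?_ ?_ <;> intro a ha b hb <;>
    simp only [mem_Icc, HasAntidiagonal.mem_antidiagonal, Prod.ext_iff] at ha hb ⊢
  any_goals omega
  rw [sum_sub_sum_eq_sum_mul_centralBracket (b - a) (fun t ↦ ((a - 1 + n - b).choose (a - 1) : ℚ) *
    (a - 1 + n - b).choose (t + a)) (L := n) (by omega)]
  refine sum_congr rfl fun t _ ↦ ?_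
  rw [show n - 1 - (b - a) = a - 1 + n - b by omega, show t + 1 + (a - 1) = t + a by omega]

lemma sum_range_centralBracket_mul_choose (e : ℕ) {N L : ℕ} (hN : N ≤ L) :
    ∑ t ∈ range L, centralBracket e t * N.choose (t + 1) =
      intChoose (N + 2 * e) (e + 2) - intChoose (N + 2 * e) (e - 2) := by
  have h₁ := sum_range_choose_succ_mul_intChoose hN (2 * e) (e + 2)
  have h₂ := sum_range_choose_succ_mul_intChoose hN (2 * e) (e - 2)
  have hsymm : intChoose (2 * e) (e - 2) = intChoose (2 * e) (e + 2) := by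
    rw [← intChoose.symm]; push_cast; ring_nf
  rw [hsymm] at h₂
  rw [← sub_sub_sub_cancel_right _ _ (intChoose (2 * e) (e + 2)), ← h₁, ← h₂]
  simp only [centralBracket, sub_mul, sum_sub_distrib]
  congr 1 <;> refine sum_congr rfl fun t _ ↦ ?_ <;> rw [mul_comm] <;> congr 2 <;> ring

theorem sum_antidiagonal_intChoose_sub (n : ℕ) (hn : 3 ≤ n) :
    ∑ p ∈ antidiagonal (n - 1),
        (intChoose (p.2 + 2 * p.1) (p.1 + 2) - intChoose (p.2 + 2 * p.1) (p.1 - 2)) =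
      (2 * n - 1).choose (n - 2) - (n - 1 : ℕ) - (2 * n - 1).choose (n + 2) := by
  rw [Nat.sum_antidiagonal_eq_sum_range_succ (fun a b ↦ intChoose (b + 2 * a) (a + 2) -
    intChoose (b + 2 * a) (a - 2)), Nat.succ_eq_add_one, Nat.sub_add_cancel (by omega)]
  have hockey (r : ℕ) : ∑ e ∈ range n, ((n - 1 + e).choose r : ℚ) =
      (2 * n - 1).choose (r + 1) - (n - 1).choose (r + 1) := by
    rw [← sum_Ico_choose_eq_sub (by omega), sum_Ico_eq_sum_range,
      show 2 * n - 1 - (n - 1) = n by omega]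
  calc _ = ∑ e ∈ range n, (((n - 1 + e).choose (n - 3) : ℚ) - (n - 1 + e).choose (n + 1)) := by
        refine sum_congr rfl fun e he ↦ ?_
        simp only [mem_range] at he
        rw [show n - 1 - e + 2 * e = n - 1 + e by omega,
          show (e + 2 : ℤ) = (n - 1 + e : ℕ) - (n - 3 : ℕ) by omega, intChoose.symm,
          show (e - 2 : ℤ) = (n - 1 + e : ℕ) - (n + 1 : ℕ) by omega, intChoose.symm,
          intChoose.natCast, intChoose.natCast]
    _ = _ := by
        rw [sum_sub_distrib, hockey, hockey, show n - 3 + 1 = n - 2 by omega,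
          Nat.choose_symm_of_eq_add (by omega : n - 1 = n - 2 + 1), Nat.choose_one_right,
          Nat.choose_eq_zero_of_lt (by omega : n - 1 < n + 1 + 1)]
        simp

theorem T₃_eq (n : ℕ) (hn : 3 ≤ n) :
    T₃ n =
      2 * rowSum (2 * n - 1) (n - 2) - (2 * n - 1).choose (n - 2) + (n - 1 : ℕ) +
        (2 * n - 1).choose (n + 2) := by
  rw [T₃_eq_sum_antidiagonal]
  calc _ = ∑ p ∈ (antidiagonal (n - 1) : Finset (ℕ × ℕ)), ∑ t ∈ range n,
        centralBracket p.1 t * ((2 * p.2).choose (p.2 + (t + 1)) - p.2.choose (t + 1) : ℚ) := by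
        refine sum_congr rfl fun p _ ↦ ?_
        rw [sum_comm]
        refine sum_congr rfl fun t _ ↦ ?_
        rw [two_mul, ← sum_Icc_choose_mul_choose_add, mul_sum]
        refine sum_congr rfl fun x _ ↦ ?_
        rw [add_assoc]
        ring
    _ = ∑ t ∈ range (n - 1 + 1),
          (centralConv (n - 1) (1 - t) (1 + t) - centralConv (n - 1) (-3 - t) (1 + t)) -
        ∑ p ∈ (antidiagonal (n - 1) : Finset (ℕ × ℕ)),
          (intChoose (p.2 + 2 * p.1) (p.1 + 2) - intChoose (p.2 + 2 * p.1) (p.1 - 2)) := by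
        simp only [mul_sub, sum_sub_distrib]
        congr 1
        · rw [sum_comm, ← sum_sub_distrib, Nat.sub_add_cancel (by omega : 1 ≤ n)]
          refine sum_congr rfl fun t _ ↦ ?_
          simp only [centralConv, centralBracket, ← sum_sub_distrib]
          refine sum_congr rfl fun p _ ↦ ?_
          rw [show (p.2 + (1 + t) : ℤ) = (p.2 + (t + 1) : ℕ) by push_cast; ring,
            intChoose.natCast]
          ring
        · rw [← sum_sub_distrib]
          refine sum_congr rfl fun p hp ↦ sum_range_centralBracket_mul_choose p.1 ?_
          rw [HasAntidiagonal.mem_antidiagonal] at hp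
          omega
    _ = _ := by
        rw [sum_range_centralConv_sub, sum_antidiagonal_intChoose_sub n hn,
          show n - 1 - 1 - 2 * (n - 1) = 0 by omega, show n - 1 - 3 - 2 * (n - 1) = 0 by omega,
          show 2 * (n - 1) + 1 = 2 * n - 1 by omega, show n - 1 - 1 = n - 2 by omega]
        simp only [rowSum, range_zero, sum_empty]
        ring

lemma rowSum_odd_sub_one {m : ℕ} (hm : 1 ≤ m) :
    rowSum (2 * m + 1) (m - 1) = 4 ^ m - (2 * m + 1).choose m - (2 * m + 1).choose (m - 1) := by
  have h := Nat.sum_range_choose_halfway m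
  rw [show m + 1 = m - 1 + 1 + 1 by omega, sum_range_succ, sum_range_succ,
    Nat.sub_add_cancel hm] at h
  rw [rowSum]
  have h' : ((4 ^ m : ℕ) : ℚ) = 4 ^ m := by push_cast; rfl
  rw [← h', ← h]
  push_cast
  ring

lemma cast_choose_succ_right_eq {a r : ℕ} (hr : r ≤ a) :
    (a.choose (r + 1) : ℚ) = a.choose r * (a - r) / (r + 1) := by
  have h : ((a.choose (r + 1) * (r + 1) : ℕ) : ℚ) = ((a.choose r * (a - r) : ℕ) : ℚ) := by
    rw [Nat.choose_succ_right_eq]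
  push_cast [Nat.cast_sub hr] at h
  rw [eq_div_iff (by positivity), h]

-- What is left of the final identity (with `n = k + 3`) once every row is reduced to row `2k+4`.
lemma central_row_relation (k : ℕ) :
    ((k + 2) * (k + 3) : ℚ) * (2 * k + 4).choose (k + 2) +
        2 * (k + 5) * (2 * k + 4).choose (k + 5) =
      4 * (k + 2) * (2 * k + 4).choose (k + 3) +
        (k ^ 2 + 7 * k + 4) * (2 * k + 4).choose (k + 4) := by
  have c₁ := cast_choose_succ_right_eq (a := 2 * k + 4) (r := k + 2) (by omega)
  have c₂ := cast_choose_succ_right_eq (a := 2 * k + 4) (r := k + 3) (by omega)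
  have c₃ := cast_choose_succ_right_eq (a := 2 * k + 4) (r := k + 4) (by omega)
  push_cast at c₁ c₂ c₃
  rw [c₃, c₂, c₁]
  field_simp
  ring

theorem closed_form_identity (n : ℕ) (hn : 3 ≤ n) :
    (n - 1 : ℕ) * ((2 * n - 2).choose (n - 1) : ℚ) +
      ((n - 2 : ℕ) * (((2 * n - 1).choose n : ℚ) - (2 * n - 1).choose (n + 1)) +
        (2 * n - 2).choose (n - 1) - (2 * n - 2).choose n - (2 * n - 2).choose (n + 1) +
        (2 * n - 2).choose (n + 2) - n + 1) +
      (2 * rowSum (2 * n - 1) (n - 2) - (2 * n - 1).choose (n - 2) + (n - 1 : ℕ) +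
        (2 * n - 1).choose (n + 2)) =
    2 ^ (2 * n - 1) + ((n : ℚ) - 1) * (Nat.choose (2 * n - 2) (n - 1) : ℚ) -
      (4 / (n : ℚ)) * (Nat.choose (2 * n) (n - 2) : ℚ) - (Nat.choose (2 * n) n : ℚ) := by
  obtain ⟨k, rfl⟩ : ∃ k, n = k + 3 := ⟨n - 3, by omega⟩
  have hrow := rowSum_odd_sub_one (m := k + 2) (by omega)
  rw [show 2 * (k + 2) + 1 = 2 * k + 5 by omega, show k + 2 - 1 = k + 1 by omega] at hrow
  rw [show 2 * (k + 3) - 2 = 2 * k + 4 by omega, show 2 * (k + 3) - 1 = 2 * k + 5 by omega,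
    show 2 * (k + 3) = 2 * k + 6 by omega, show k + 3 - 1 = k + 2 by omega,
    show k + 3 - 2 = k + 1 by omega, show k + 3 + 1 = k + 4 by ring,
    show k + 3 + 2 = k + 5 by ring, hrow]
  have pascal (a r : ℕ) : ((a + 1).choose (r + 1) : ℚ) = a.choose r + a.choose (r + 1) := by
    rw [Nat.choose_succ_succ', Nat.cast_add]
  have symm (a r s : ℕ) (h : a = r + s) : (a.choose r : ℚ) = a.choose s := by
    rw [Nat.choose_symm_of_eq_add h]
  rw [symm (2 * k + 6) (k + 1) (k + 5) (by ring), pascal (2 * k + 5) (k + 4),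
    pascal (2 * k + 5) (k + 2), pascal (2 * k + 4) (k + 4), pascal (2 * k + 4) (k + 3),
    pascal (2 * k + 4) (k + 2), pascal (2 * k + 4) (k + 1), pascal (2 * k + 4) k,
    symm (2 * k + 4) k (k + 4) (by ring), symm (2 * k + 4) (k + 1) (k + 3) (by ring),
    show (2 : ℚ) ^ (2 * k + 5) = 2 * 4 ^ (k + 2) by
      rw [pow_succ, show 2 * k + 4 = 2 * (k + 2) by ring, pow_mul]; norm_num; ring]
  push_cast
  field_simp
  linear_combination central_row_relation k

/-- Theorem 4 of the paper (formula (A73)): the number `Ω⁺(n) = T₁(n) + T₂(n) + T₃(n)` of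
`𝒟`-invariant ideals of the ring `R_n(K,J)` equals
`2^(2n-1) + (n-1)·C(2n-2,n-1) - (4/n)·C(2n,n-2) - C(2n,n)`. -/
theorem Dinvariant_ideals_count (n : ℕ) (hn : 3 ≤ n) :
    -- T₁
    (∑ i ∈ Finset.Icc 2 n, ∑ j ∈ Finset.Icc 1 (i - 1),
        (Nat.choose (n - i + j - 1) (j - 1) : ℚ) * (Nat.choose (i - 1 + n - j) (i - 1) : ℚ)) +
    -- T₂
    (∑ i ∈ Finset.Icc 2 n, ∑ j ∈ Finset.Icc i (n - 1),
        (Nat.choose (i - 1 + n - j) (i - 1) : ℚ) *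
          ((Nat.choose (n - i + j) j : ℚ) - (Nat.choose (n - i + j) (j + 1) : ℚ))) +
    -- T₃
    (∑ i ∈ Finset.Icc 2 n, ∑ j ∈ Finset.Icc i n,
        ((∑ t ∈ Finset.range (j - i + 2),
            (Nat.choose (i - 1 + n - j) (i - 1) : ℚ) * (Nat.choose (i - 1 + n - j) (t + i) : ℚ) *
              (Nat.choose (2 * (j - i)) (j - i + 1 - t) : ℚ)) -
          (∑ t ∈ Finset.range (j - i - 2),
            (Nat.choose (i - 1 + n - j) (i - 1) : ℚ) * (Nat.choose (i - 1 + n - j) (t + i) : ℚ) *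
              (Nat.choose (2 * (j - i)) (j - i - 3 - t) : ℚ)))) =
    2 ^ (2 * n - 1) + ((n : ℚ) - 1) * (Nat.choose (2 * n - 2) (n - 1) : ℚ) -
      (4 / (n : ℚ)) * (Nat.choose (2 * n) (n - 2) : ℚ) - (Nat.choose (2 * n) n : ℚ) := by
  change T₁ n + T₂ n + T₃ n = _
  rw [T₁_eq, T₂_eq n (by omega), T₃_eq n hn]
  exact closed_form_identity n hn
end

section
/- Let n ≥ 1 be a natural number, let z₁,…,z_n be complex numbers with z₁ + ⋯ + z_n = 1, and let s₁,…,s_n be natural numbers. Then Σ_{i=1}^{n} z_i^{s_i+1} · Σ_{(j_k)_{k≠i}, 0 ≤ j_k ≤ s_k for each k≠i} ( (s_i + Σ_{k≠i} j_k)! / (s_i! · ∏_{k≠i} j_k!) ) · ∏_{k≠i} z_k^{j_k} = 1. -/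
/-!
Put `P(a) = multinomial(a) · ∏ₖ zₖ ^ aₖ` for `a : ι → ℕ`. Probabilistically, `P(a)` is the chance
that `|a|` independent draws with law `z` produce each letter `k` exactly `aₖ` times, and the
`i`-th summand of the identity is `zᵢ · Σ P(a)` over the face `aᵢ = sᵢ` of the box `a ≤ s`: the
chance that `i` is the first letter to exceed its quota. Since some letter must eventually do so,
these chances add up to `1`.

Algebraically, multiply `Σ_{a ≤ s} P(a)` by `Σₖ zₖ` and split each product `zₖ P(a)` according to
whether `a + eₖ` stays in the box. By Pascal's rule `P(b) = Σₖ zₖ P(b - eₖ)` (for `b ≠ 0`) the steps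
staying inside recover every `P(b)` with `0 ≠ b ≤ s`, while the steps leaving through `aₖ = sₖ` give
the summands of the identity:
`(Σ z) · Σ_{a ≤ s} P(a) + 1 = Σ_{a ≤ s} P(a) + Σₖ zₖ Σ_{a ≤ s, aₖ = sₖ} P(a)`.
-/

open Finset

namespace Nat

variable {α : Type*} [DecidableEq α] {s : Finset α} {f : α → ℕ} {k : α}

theorem sum_mul_multinomial_sub_single (hk : k ∈ s) (hfk : f k ≠ 0) :
    (∑ i ∈ s, f i) * multinomial s (f - Pi.single k 1) = f k * multinomial s f := by
  obtain ⟨m, hm⟩ := exists_eq_succ_of_ne_zero hfk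
  have hrest : multinomial (s.erase k) (f - Pi.single k 1) = multinomial (s.erase k) f :=
    multinomial_congr fun i hi => by simp [ne_of_mem_erase hi]
  have hsum : ∑ i ∈ s.erase k, (f - Pi.single k 1 : α → ℕ) i = ∑ i ∈ s.erase k, f i :=
    sum_congr rfl fun i hi => by simp [ne_of_mem_erase hi]
  rw [← insert_erase hk, multinomial_insert (notMem_erase k s),
    multinomial_insert (notMem_erase k s), sum_insert (notMem_erase k s), hrest, hsum]
  simp only [Pi.sub_apply, Pi.single_eq_same, hm, succ_sub_one]
  rw [← mul_assoc, ← mul_assoc, show m + 1 + ∑ i ∈ s.erase k, f i =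
      (m + ∑ i ∈ s.erase k, f i) + 1 by omega, add_one_mul_choose_eq, mul_comm (m + 1)]

theorem multinomial_eq_sum_multinomial_sub_single (hf : ∑ i ∈ s, f i ≠ 0) :
    multinomial s f = ∑ k ∈ s with f k ≠ 0, multinomial s (f - Pi.single k 1) := by
  refine Nat.eq_of_mul_eq_mul_left (Nat.pos_of_ne_zero hf) ?_
  rw [mul_sum, sum_congr rfl fun k hk =>
    sum_mul_multinomial_sub_single (mem_filter.1 hk).1 (mem_filter.1 hk).2, ← sum_mul,
    sum_filter_ne_zero]

theorem cast_multinomial_eq_div {K : Type*} [Field K] [CharZero K] (hk : k ∈ s) (f : α → ℕ) :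
    (multinomial s f : K) =
      ((f k + ∑ i ∈ s.erase k, f i)! : K) / ((f k)! * ∏ i ∈ s.erase k, ((f i)! : K)) := by
  rw [add_sum_erase _ _ hk, mul_prod_erase s (fun i => ((f i)! : K)) hk,
    eq_div_iff (prod_ne_zero_iff.2 fun i _ => by simp [factorial_ne_zero]), mul_comm]
  exact_mod_cast multinomial_spec s f

end Nat

section MultinomialTerm

variable {ι R : Type*} [Fintype ι] [CommSemiring R] (z : ι → R)

def multinomialTerm (a : ι → ℕ) : R :=
  Nat.multinomial univ a * ∏ i, z i ^ a i

@[simp]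
theorem multinomialTerm_zero : multinomialTerm z 0 = 1 := by
  simp [multinomialTerm, Nat.multinomial]

variable [DecidableEq ι]

theorem prod_pow_eq_mul_prod_pow_sub_single {a : ι → ℕ} {k : ι} (hk : a k ≠ 0) :
    ∏ i, z i ^ a i = z k * ∏ i, z i ^ (a - Pi.single k 1 : ι → ℕ) i := by
  have hle : Pi.single k 1 ≤ a := fun i => by
    rcases eq_or_ne i k with rfl | hi <;> simp [*, Nat.one_le_iff_ne_zero]
  conv_lhs => rw [← tsub_add_cancel_of_le hle]
  simp only [Pi.add_apply, pow_add, prod_mul_distrib]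
  rw [mul_comm]
  congr
  simp [Pi.single_apply, pow_ite]

theorem multinomialTerm_eq_sum {a : ι → ℕ} (ha : a ≠ 0) :
    multinomialTerm z a = ∑ k with a k ≠ 0, z k * multinomialTerm z (a - Pi.single k 1) := by
  have hsum : ∑ i, a i ≠ 0 := fun h => ha (funext fun i => sum_eq_zero_iff.1 h i (mem_univ i))
  rw [multinomialTerm, Nat.multinomial_eq_sum_multinomial_sub_single hsum, Nat.cast_sum, sum_mul]
  refine sum_congr rfl fun k hk => ?_
  rw [multinomialTerm, prod_pow_eq_mul_prod_pow_sub_single z (mem_filter.1 hk).2]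
  ring

end MultinomialTerm

section Box

variable {ι : Type*} [Fintype ι] [DecidableEq ι]

theorem sum_Iic_filter_ne_add_single {M : Type*} [AddCommMonoid M] (s : ι → ℕ) (k : ι)
    (g : (ι → ℕ) → M) :
    ∑ a ∈ Iic s with a k ≠ s k, g (a + Pi.single k 1) = ∑ b ∈ Iic s with b k ≠ 0, g b := by
  refine sum_nbij' (· + Pi.single k 1) (· - Pi.single k 1) ?_ ?_ ?_ ?_ fun _ _ => rfl
  all_goals
    intro a ha
    simp only [mem_filter, mem_Iic, Pi.le_def] at ha
  · simp only [mem_filter, mem_Iic, Pi.le_def, Pi.add_apply]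
    refine ⟨fun i => ?_, by simp⟩
    rcases eq_or_ne i k with rfl | hi
    · have := ha.1 i
      simp only [Pi.single_eq_same]
      omega
    · simpa [hi] using ha.1 i
  · simp only [mem_filter, mem_Iic, Pi.le_def, Pi.sub_apply]
    refine ⟨fun i => (Nat.sub_le _ _).trans (ha.1 i), ?_⟩
    have := ha.1 k
    simp only [Pi.single_eq_same]
    omega
  · exact add_tsub_cancel_right a _
  · funext i
    rcases eq_or_ne i k with rfl | hi
    · simp only [Pi.add_apply, Pi.sub_apply, Pi.single_eq_same]
      omega
    · simp [hi]

theorem sum_Iic_filter_eq_zero_update {M : Type*} [AddCommMonoid M] (s : ι → ℕ) (i : ι)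
    (g : (ι → ℕ) → M) :
    ∑ j ∈ Iic s with j i = 0, g (Function.update j i (s i)) =
      ∑ a ∈ Iic s with a i = s i, g a := by
  refine sum_nbij' (Function.update · i (s i)) (Function.update · i 0) ?_ ?_ ?_ ?_
    fun _ _ => rfl
  iterate 2
    intro a ha
    simp only [mem_filter, mem_Iic, Pi.le_def, Function.update_self, and_true] at ha ⊢
    intro k
    rcases eq_or_ne k i with rfl | hk
    · simp
    · simpa [hk] using ha.1 k
  all_goals
    intro a ha
    simp only [mem_filter] at ha
    simp [← ha.2]

variable {R : Type*} [CommSemiring R] (z : ι → R) (s : ι → ℕ)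

theorem sum_sum_Iic_filter_mul_multinomialTerm_sub_single_add_one :
    ∑ k, ∑ b ∈ Iic s with b k ≠ 0, z k * multinomialTerm z (b - Pi.single k 1) + 1 =
      ∑ b ∈ Iic s, multinomialTerm z b := by
  have h0 : (0 : ι → ℕ) ∈ Iic s := mem_Iic.2 fun i => Nat.zero_le (s i)
  have hpascal : ∀ b ∈ (Iic s).erase 0,
      ∑ k with b k ≠ 0, z k * multinomialTerm z (b - Pi.single k 1) = multinomialTerm z b :=
    fun b hb => (multinomialTerm_eq_sum z (ne_of_mem_erase hb)).symm
  calc ∑ k, ∑ b ∈ Iic s with b k ≠ 0, z k * multinomialTerm z (b - Pi.single k 1) + 1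
      = ∑ b ∈ Iic s, ∑ k with b k ≠ 0, z k * multinomialTerm z (b - Pi.single k 1) + 1 := by
        simp only [sum_filter]
        rw [sum_comm]
    _ = ∑ b ∈ (Iic s).erase 0, multinomialTerm z b + multinomialTerm z 0 := by
        rw [← sum_erase_add _ _ h0, sum_congr rfl hpascal]
        simp
    _ = ∑ b ∈ Iic s, multinomialTerm z b := sum_erase_add _ _ h0

theorem sum_mul_sum_Iic_multinomialTerm_add_one :
    (∑ k, z k) * ∑ a ∈ Iic s, multinomialTerm z a + 1 =
      ∑ a ∈ Iic s, multinomialTerm z a +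
        ∑ k, z k * ∑ a ∈ Iic s with a k = s k, multinomialTerm z a := by
  have hsplit : ∀ k, z k * ∑ a ∈ Iic s, multinomialTerm z a =
      ∑ b ∈ Iic s with b k ≠ 0, z k * multinomialTerm z (b - Pi.single k 1) +
        z k * ∑ a ∈ Iic s with a k = s k, multinomialTerm z a := by
    intro k
    rw [← sum_filter_not_add_sum_filter _ (fun a => a k = s k), mul_add, mul_sum,
      ← sum_Iic_filter_ne_add_single s k]
    simp only [add_tsub_cancel_right]
  rw [sum_mul, sum_congr rfl fun k _ => hsplit k, sum_add_distrib, add_right_comm,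
    sum_sum_Iic_filter_mul_multinomialTerm_sub_single_add_one]

theorem sum_mul_sum_Iic_filter_eq_multinomialTerm_eq_one {R : Type*} [CommRing R] {z : ι → R}
    (hz : ∑ k, z k = 1) (s : ι → ℕ) :
    ∑ k, z k * ∑ a ∈ Iic s with a k = s k, multinomialTerm z a = 1 := by
  have h := sum_mul_sum_Iic_multinomialTerm_add_one z s
  rw [hz, one_mul] at h
  exact (add_left_cancel h).symm

theorem pow_succ_mul_sum_erase_eq_mul_multinomialTerm {K : Type*} [Field K] [CharZero K]
    (z : ι → K) (s : ι → ℕ) (i : ι) (j : ι → ℕ) :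
    z i ^ (s i + 1) *
        (((s i + ∑ k ∈ univ.erase i, j k).factorial : K) /
            ((s i).factorial * ∏ k ∈ univ.erase i, ((j k).factorial : K)) *
          ∏ k ∈ univ.erase i, z k ^ j k) =
      z i * multinomialTerm z (Function.update j i (s i)) := by
  have hi := mem_univ i
  have hrest : ∀ k ∈ univ.erase i, Function.update j i (s i) k = j k :=
    fun k hk => Function.update_of_ne (ne_of_mem_erase hk) _ _
  have hfact : ∏ k ∈ univ.erase i, ((Function.update j i (s i) k).factorial : K) =
      ∏ k ∈ univ.erase i, ((j k).factorial : K) := prod_congr rfl fun k hk => by rw [hrest k hk]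
  have hpow : ∏ k ∈ univ.erase i, z k ^ Function.update j i (s i) k =
      ∏ k ∈ univ.erase i, z k ^ j k := prod_congr rfl fun k hk => by rw [hrest k hk]
  rw [multinomialTerm, Nat.cast_multinomial_eq_div hi, ← mul_prod_erase _ _ hi,
    sum_congr rfl hrest, hfact, hpow, Function.update_self, pow_succ]
  ring

end Box

theorem zeilberger_krivokolesko_identity_general (n : ℕ) (z : Fin n → ℂ)
    (s : Fin n → ℕ) (hz : ∑ i, z i = 1) :
    ∑ i, z i ^ (s i + 1) *
      ∑ j ∈ (Fintype.piFinset fun k => Finset.range (s k + 1)).filter (fun j => j i = 0),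
        (((s i + ∑ k ∈ Finset.univ.erase i, j k).factorial : ℂ) /
            (((s i).factorial : ℂ) * ∏ k ∈ Finset.univ.erase i, ((j k).factorial : ℂ))) *
          ∏ k ∈ Finset.univ.erase i, z k ^ j k = 1 := by
  have hbox : (Fintype.piFinset fun k => range (s k + 1)) = Iic s := by
    ext a
    simp [Fintype.mem_piFinset, Pi.le_def]
  rw [hbox, ← sum_mul_sum_Iic_filter_eq_multinomialTerm_eq_one hz s]
  refine sum_congr rfl fun i _ => ?_
  rw [mul_sum, ← sum_Iic_filter_eq_zero_update s i, mul_sum]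
  exact sum_congr rfl fun j _ => pow_succ_mul_sum_erase_eq_mul_multinomialTerm z s i j

/-- The paper's Theorem (K2): if `z₁ + ⋯ + z_n = 1`, then for any natural numbers
`s₁, …, s_n`, `Σ_i z_i^{s_i+1} Σ_{0 ≤ j_k ≤ s_k, k ≠ i} multinomial · ∏_{k≠i} z_k^{j_k} = 1`.
Tuples `(j_k)_{k≠i}` are encoded as functions `j : Fin n → ℕ` with `j i = 0`. -/
theorem zeilberger_krivokolesko_identity (n : ℕ) (hn : 1 ≤ n) (z : Fin n → ℂ)
    (s : Fin n → ℕ) (hz : ∑ i, z i = 1) :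
    ∑ i, z i ^ (s i + 1) *
      ∑ j ∈ (Fintype.piFinset fun k => Finset.range (s k + 1)).filter (fun j => j i = 0),
        (((s i + ∑ k ∈ Finset.univ.erase i, j k).factorial : ℂ) /
            (((s i).factorial : ℂ) * ∏ k ∈ Finset.univ.erase i, ((j k).factorial : ℂ))) *
          ∏ k ∈ Finset.univ.erase i, z k ^ j k = 1 :=
  zeilberger_krivokolesko_identity_general n z s hz
end

section
/- Let d and s be natural numbers, let α₀,…,α_d be natural numbers with α₀ + ⋯ + α_d = 2s+1, and let γ₀,…,γ_d be real numbers. Then 2^{2s} · ∏_{i=0}^{d} ( α_i! · C(α_i+γ_i, α_i) ) = Σ_{j=0}^{s} (−1)^j · C( d + Σ_{i=0}^{d}(α_i+γ_i), j ) · Σ_{β₀+⋯+β_d = s−j} ∏_{i=0}^{d} C(β_i+γ_i, β_i) · (2β_i+γ_i+1)^{α_i}, where the inner sum ranges over all tuples (β₀,…,β_d) of natural numbers with β₀+⋯+β_d = s−j. -/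
/-! The generating function of `genChoose (n + γ) n` is `(1 - X)^{-(γ+1)}`, and multiplying its
`n`-th coefficient by `2n + γ + 1` is the operator `θ = 2X d/dX + (γ + 1)`. With the Cayley
variable `u = (1 + X)/(1 - X)` one finds `θ^a (1 - X)^{-(γ+1)} = (1 - X)^{-(γ+1)} P_a(u)` for a
polynomial `P_a` of degree `a` with parity `a` and leading coefficient `(γ + 1)_a`. Hence the
right-hand side of the identity is the coefficient of `X^s` in `(1 - X)^{2s} Q(u)` with
`Q = ∏ P_{α_i}` odd of degree `2s + 1`. The term `u^m` contributes the coefficient of `X^s` in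
`(1 + X)^m (1 - X)^{2s - m}`: for odd `m ≤ 2s` this polynomial of degree `2s` is antisymmetric
under reversal of its coefficients, so it vanishes, and only `m = 2s + 1` survives, contributing
`∑_{j ≤ s} C(2s + 1, j) = 2^{2s}`. -/

/-- The generalized binomial coefficient `C(x,k) = x(x-1)⋯(x-k+1)/k!` for real `x`. -/
noncomputable def genChoose (x : ℝ) (k : ℕ) : ℝ :=
  (∏ i ∈ Finset.range k, (x - i)) / (k.factorial : ℝ)

open Finset

lemma genChoose_eq_ringChoose (x : ℝ) (k : ℕ) : genChoose x k = Ring.choose x k := by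
  rw [Ring.choose_eq_smul, genChoose, ← descPochhammer_eval_eq_prod_range, smul_eq_mul,
    inv_mul_eq_div, ← Polynomial.aeval_eq_smeval, Polynomial.aeval_def, ← Polynomial.eval_map,
    descPochhammer_map]

lemma factorial_mul_genChoose_add_self (γ : ℝ) (k : ℕ) :
    (k.factorial : ℝ) * genChoose (k + γ) k = (ascPochhammer ℝ k).eval (γ + 1) := by
  rw [genChoose, mul_div_cancel₀ _ (by positivity), ← descPochhammer_eval_eq_prod_range,
    descPochhammer_eval_eq_ascPochhammer]
  ring_nf

namespace Polynomial

lemma reverse_X {R : Type*} [Semiring R] : (X : R[X]).reverse = 1 := by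
  have h := reverse_mul_X (1 : R[X])
  rwa [one_mul, ← C_1, reverse_C, C_1] at h

lemma reverse_pow_of_domain {R : Type*} [Semiring R] [NoZeroDivisors R] (p : R[X]) (n : ℕ) :
    (p ^ n).reverse = p.reverse ^ n := by
  induction n with
  | zero => simpa using reverse_C (1 : R)
  | succ n ih => rw [pow_succ, reverse_mul_of_domain, ih, pow_succ]

lemma coeff_comp_neg_X {R : Type*} [CommRing R] (p : R[X]) (n : ℕ) :
    (p.comp (-X)).coeff n = (-1) ^ n * p.coeff n := by
  rw [← neg_one_mul, ← C_1, ← C_neg, comp_C_mul_X_coeff, mul_comm]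

lemma coeff_prod_sum_of_natDegree_le {R ι : Type*} [CommSemiring R] (s : Finset ι)
    (f : ι → R[X]) (n : ι → ℕ) (h : ∀ i ∈ s, (f i).natDegree ≤ n i) :
    (∏ i ∈ s, f i).coeff (∑ i ∈ s, n i) = ∏ i ∈ s, (f i).coeff (n i) := by
  induction s using Finset.cons_induction with
  | empty => simp
  | cons a s ha ih =>
    have hs : (∏ i ∈ s, f i).natDegree ≤ ∑ i ∈ s, n i :=
      (natDegree_prod_le s f).trans (sum_le_sum fun i hi => h i (mem_cons_of_mem hi))
    rw [prod_cons, sum_cons, coeff_mul_add_eq_of_natDegree_le (h a (mem_cons_self a s)) hs,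
      ih fun i hi => h i (mem_cons_of_mem hi), prod_cons]

/-- Reversing the coefficients of this polynomial of degree `2s` changes its sign. -/
lemma coeff_one_add_X_pow_mul_one_sub_X_pow_of_odd {R : Type*} [CommRing R] [IsDomain R]
    [CharZero R] {M N s : ℕ} (hN : Odd N) (h : M + N = 2 * s) :
    ((1 + X : R[X]) ^ M * (1 - X) ^ N).coeff s = 0 := by
  have hdeg : ((1 + X : R[X]) ^ M * (1 - X) ^ N).natDegree = 2 * s := by
    rw [← h]
    compute_degree!
  set P : R[X] := (1 + X) ^ M * (1 - X) ^ N
  have hrev : P.reverse = -P := by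
    have h₁ : (1 + X : R[X]).reverse = 1 + X := by
      rw [add_comm, ← C_1, reverse_add_C]
      simp [reverse_X, add_comm]
    have h₂ : (1 - X : R[X]).reverse = -(1 - X) := by
      rw [sub_eq_neg_add, ← C_1, reverse_add_C]
      simp [reverse_X]
    rw [reverse_mul_of_domain, reverse_pow_of_domain, reverse_pow_of_domain, h₁, h₂, neg_pow,
      hN.neg_one_pow]
    ring
  have hs := coeff_reverse P s
  rw [hrev, hdeg, revAt_le (by omega), coeff_neg, show 2 * s - s = s by omega,
    neg_eq_self] at hs
  exact hs

end Polynomial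

/-- `θ^a (1 - X)^{-(γ+1)} = (1 - X)^{-(γ+1)} P_a(u)`, see `iterate_eulerOp_oneSubPow`. -/
noncomputable def eulerPoly (γ : ℝ) : ℕ → Polynomial ℝ
  | 0 => 1
  | a + 1 => Polynomial.C (γ + 1) * Polynomial.X * eulerPoly γ a +
      (Polynomial.X ^ 2 - 1) * Polynomial.derivative (eulerPoly γ a)

section EulerPoly

open Polynomial

variable (γ : ℝ)

lemma coeff_eulerPoly_succ (a m : ℕ) :
    (eulerPoly γ (a + 1)).coeff (m + 1) =
      (γ + 1 + m) * (eulerPoly γ a).coeff m - (m + 2) * (eulerPoly γ a).coeff (m + 2) := by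
  simp only [eulerPoly, coeff_add, coeff_sub, sub_mul, one_mul, mul_assoc, coeff_C_mul,
    coeff_X_mul, coeff_X_pow_mul', coeff_derivative]
  rcases m with _ | m
  · simp only [zero_add, Nat.not_ofNat_le_one, if_false]
    push_cast
    ring
  · simp only [le_add_iff_nonneg_left, zero_le, if_true, Nat.reduceSubDiff]
    push_cast
    ring

lemma coeff_eulerPoly_of_lt {a m : ℕ} (h : a < m) : (eulerPoly γ a).coeff m = 0 := by
  induction a generalizing m with
  | zero => simp [eulerPoly, coeff_one, h.ne']
  | succ a ih =>
    obtain ⟨m, rfl⟩ : ∃ m', m = m' + 1 := ⟨m - 1, by omega⟩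
    rw [coeff_eulerPoly_succ, ih (by omega), ih (by omega)]
    ring

lemma natDegree_eulerPoly_le (a : ℕ) : (eulerPoly γ a).natDegree ≤ a :=
  natDegree_le_iff_coeff_eq_zero.mpr fun _ hm => coeff_eulerPoly_of_lt γ (by exact_mod_cast hm)

lemma coeff_eulerPoly_self (a : ℕ) :
    (eulerPoly γ a).coeff a = (ascPochhammer ℝ a).eval (γ + 1) := by
  induction a with
  | zero => simp [eulerPoly]
  | succ a ih =>
    rw [coeff_eulerPoly_succ, ih, coeff_eulerPoly_of_lt γ (by omega), ascPochhammer_succ_eval]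
    ring

lemma eulerPoly_comp_neg_X (a : ℕ) :
    (eulerPoly γ a).comp (-X) = (-1) ^ a * eulerPoly γ a := by
  induction a with
  | zero => simp [eulerPoly]
  | succ a ih =>
    have hd : (derivative (eulerPoly γ a)).comp (-X) =
        -((-1) ^ a * derivative (eulerPoly γ a)) := by
      have h := derivative_comp (eulerPoly γ a) (-X)
      simp only [ih, derivative_mul, derivative_pow, derivative_neg, derivative_one,
        derivative_X] at h
      linear_combination h
    simp only [eulerPoly, add_comp, mul_comp, C_comp, X_comp, sub_comp, pow_comp, one_comp, hd,
      ih]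
    ring

end EulerPoly

open PowerSeries

noncomputable def oneSubPow (c : ℝ) : ℝ⟦X⟧ := rescale (-1) (binomialSeries ℝ c)

lemma coeff_oneSubPow (c : ℝ) (n : ℕ) :
    coeff n (oneSubPow c) = (-1) ^ n * Ring.choose c n := by
  simp [oneSubPow, coeff_rescale]

lemma coeff_oneSubPow_neg (c : ℝ) (n : ℕ) :
    coeff n (oneSubPow (-c)) = Ring.choose (c + n - 1) n := by
  rw [coeff_oneSubPow, Ring.choose_neg, Units.smul_def, zsmul_eq_mul,
    Int.cast_negOnePow_natCast, ← mul_assoc, ← mul_pow]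
  norm_num

lemma oneSubPow_add (a b : ℝ) : oneSubPow (a + b) = oneSubPow a * oneSubPow b := by
  simp [oneSubPow]

lemma oneSubPow_natCast (n : ℕ) : oneSubPow n = (1 - X) ^ n := by
  simp [oneSubPow, rescale_X, sub_eq_add_neg]

lemma oneSubPow_zero : oneSubPow 0 = 1 := by
  simpa using oneSubPow_natCast 0

lemma oneSubPow_sum {ι : Type*} (t : Finset ι) (f : ι → ℝ) :
    oneSubPow (∑ i ∈ t, f i) = ∏ i ∈ t, oneSubPow (f i) := by
  induction t using Finset.cons_induction with
  | empty => simp [oneSubPow_zero]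
  | cons a t ha ih => rw [sum_cons, prod_cons, oneSubPow_add, ih]

lemma one_sub_X_mul_oneSubPow_neg_one : (1 - X) * oneSubPow (-1) = 1 := by
  have h := oneSubPow_add (1 : ℕ) (-1)
  rw [oneSubPow_natCast, pow_one, Nat.cast_one, add_neg_cancel, oneSubPow_zero] at h
  exact h.symm

lemma derivative_oneSubPow (c : ℝ) :
    d⁄dX ℝ (oneSubPow c) = C (-c) * oneSubPow (c - 1) := by
  ext n
  have h := Ring.choose_smul_choose c (Nat.le_add_left 1 n)
  rw [Nat.choose_one_right, Ring.choose_one_right, Nat.add_sub_cancel, nsmul_eq_mul] at h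
  rw [coeff_derivative, coeff_C_mul, coeff_oneSubPow, coeff_oneSubPow, pow_succ]
  push_cast at h
  linear_combination (-(-1 : ℝ) ^ n) * h

noncomputable def eulerOp (γ : ℝ) (F : ℝ⟦X⟧) : ℝ⟦X⟧ := C (γ + 1) * F + 2 * X * d⁄dX ℝ F

lemma coeff_eulerOp (γ : ℝ) (F : ℝ⟦X⟧) (n : ℕ) :
    coeff n (eulerOp γ F) = (2 * n + γ + 1) * coeff n F := by
  rw [eulerOp, map_add (coeff n), coeff_C_mul, mul_assoc, two_mul, map_add (coeff n)]
  rcases n with _ | n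
  · simp
  · rw [coeff_succ_X_mul, coeff_derivative]
    push_cast
    ring

lemma coeff_iterate_eulerOp (γ : ℝ) (F : ℝ⟦X⟧) (a n : ℕ) :
    coeff n ((eulerOp γ)^[a] F) = (2 * n + γ + 1) ^ a * coeff n F := by
  induction a with
  | zero => simp
  | succ a ih => rw [Function.iterate_succ_apply', coeff_eulerOp, ih, pow_succ]; ring

noncomputable def cayleySeries : ℝ⟦X⟧ := (1 + X) * oneSubPow (-1)

lemma eulerOp_oneSubPow_mul_aeval (γ : ℝ) (p : Polynomial ℝ) :
    eulerOp γ (oneSubPow (-(γ + 1)) * p.aeval cayleySeries) =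
      oneSubPow (-(γ + 1)) * (Polynomial.C (γ + 1) * Polynomial.X * p +
        (Polynomial.X ^ 2 - 1) * p.derivative).aeval cayleySeries := by
  have hw := one_sub_X_mul_oneSubPow_neg_one
  have hS : d⁄dX ℝ (oneSubPow (-(γ + 1))) =
      C (γ + 1) * oneSubPow (-(γ + 1)) * oneSubPow (-1) := by
    rw [derivative_oneSubPow, neg_neg, sub_eq_add_neg, oneSubPow_add, mul_assoc]
  have hu : d⁄dX ℝ cayleySeries = 2 * oneSubPow (-1) ^ 2 := by
    have hw' : d⁄dX ℝ (oneSubPow (-1)) = oneSubPow (-1) ^ 2 := by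
      rw [derivative_oneSubPow, show (-1 : ℝ) - 1 = -1 + -1 by norm_num, oneSubPow_add]
      simp [sq]
    rw [cayleySeries, Derivation.leibniz, hw', map_add, derivative_X, Derivation.map_one_eq_zero]
    simp only [smul_eq_mul]
    linear_combination (-oneSubPow (-1)) * hw
  rw [eulerOp, Derivation.leibniz, Derivation.map_aeval, hS, hu]
  simp only [smul_eq_mul, map_add, map_mul, map_sub, map_pow, Polynomial.aeval_C,
    Polynomial.aeval_X, map_one]
  generalize p.aeval cayleySeries = g, p.derivative.aeval cayleySeries = g'
  simp only [cayleySeries, algebraMap_eq]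
  linear_combination (-((C γ + 1) * oneSubPow (-(γ + 1)) * g) -
    oneSubPow (-(γ + 1)) * g' * ((1 - X) * oneSubPow (-1) + 1)) * hw

lemma iterate_eulerOp_oneSubPow (γ : ℝ) (a : ℕ) :
    (eulerOp γ)^[a] (oneSubPow (-(γ + 1))) =
      oneSubPow (-(γ + 1)) * (eulerPoly γ a).aeval cayleySeries := by
  induction a with
  | zero => simp [eulerPoly]
  | succ a ih => rw [Function.iterate_succ_apply', ih, eulerOp_oneSubPow_mul_aeval, eulerPoly]

lemma oneSubPow_mul_cayleySeries_pow {n m : ℕ} (h : m ≤ n) :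
    oneSubPow n * cayleySeries ^ m = (1 + X) ^ m * (1 - X) ^ (n - m) := by
  obtain ⟨k, rfl⟩ := Nat.exists_eq_add_of_le h
  have hw : (1 - X) ^ m * oneSubPow (-1) ^ m = 1 := by
    rw [← mul_pow, one_sub_X_mul_oneSubPow_neg_one, one_pow]
  rw [oneSubPow_natCast, cayleySeries, Nat.add_sub_cancel_left, mul_pow]
  linear_combination ((1 + X) ^ m * (1 - X) ^ k) * hw

lemma coeff_one_add_X_pow_mul_oneSubPow_neg_one (s : ℕ) :
    coeff s ((1 + X) ^ (2 * s + 1) * oneSubPow (-1)) = 2 ^ (2 * s) := by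
  have h := congrArg (Nat.cast (R := ℝ)) (Nat.sum_range_choose_halfway s)
  push_cast at h
  rw [coeff_mul, Finset.Nat.sum_antidiagonal_eq_sum_range_succ_mk, pow_mul,
    show (2 : ℝ) ^ 2 = 4 by norm_num, ← h]
  refine sum_congr rfl fun j _ => ?_
  rw [coeff_oneSubPow_neg, ← Polynomial.coe_one, ← Polynomial.coe_X, ← Polynomial.coe_add,
    ← Polynomial.coe_pow, Polynomial.coeff_coe, Polynomial.coeff_one_add_X_pow]
  simp [Ring.choose_natCast]

lemma coeff_oneSubPow_mul_aeval_cayleySeries {s : ℕ} {Q : Polynomial ℝ}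
    (hdeg : Q.natDegree ≤ 2 * s + 1) (hodd : Q.comp (-Polynomial.X) = -Q) :
    coeff s (oneSubPow (2 * s : ℕ) * Q.aeval cayleySeries) =
      2 ^ (2 * s) * Q.coeff (2 * s + 1) := by
  rw [Polynomial.aeval_eq_sum_range' (n := 2 * s + 2) (by omega), mul_sum, map_sum,
    sum_range_succ, sum_eq_zero, zero_add, mul_smul_comm, coeff_smul, smul_eq_mul, pow_succ,
    ← mul_assoc, oneSubPow_mul_cayleySeries_pow le_rfl, Nat.sub_self, pow_zero, mul_one,
    cayleySeries, ← mul_assoc, ← pow_succ, coeff_one_add_X_pow_mul_oneSubPow_neg_one, mul_comm]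
  intro m hm
  have hm : m ≤ 2 * s := Nat.lt_succ_iff.mp (mem_range.mp hm)
  rw [mul_smul_comm, coeff_smul, smul_eq_mul]
  rcases Nat.even_or_odd m with he | ho
  · have h := Polynomial.coeff_comp_neg_X Q m
    rw [hodd, Polynomial.coeff_neg, he.neg_one_pow, one_mul] at h
    rw [show Q.coeff m = 0 by linarith, zero_mul]
  · rw [oneSubPow_mul_cayleySeries_pow hm, ← Polynomial.coe_one, ← Polynomial.coe_X,
      ← Polynomial.coe_add, ← Polynomial.coe_sub, ← Polynomial.coe_pow, ← Polynomial.coe_pow,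
      ← Polynomial.coe_mul, Polynomial.coeff_coe,
      Polynomial.coeff_one_add_X_pow_mul_one_sub_X_pow_of_odd (by
        rcases ho with ⟨k, rfl⟩; exact ⟨s - k - 1, by omega⟩) (by omega), mul_zero]

lemma coeff_prod_fin_eq_sum_antidiagonalTuple {R : Type*} [CommSemiring R] {k : ℕ}
    (f : Fin k → R⟦X⟧) (n : ℕ) :
    coeff n (∏ i, f i) = ∑ β ∈ Finset.Nat.antidiagonalTuple k n, ∏ i, coeff (β i) (f i) := by
  classical
  rw [coeff_prod]
  refine sum_equiv Finsupp.equivFunOnFinite (fun l => ?_) fun l _ => rfl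
  simp [Finset.Nat.mem_antidiagonalTuple]

lemma coeff_oneSubPow_mul_aeval_prod_eulerPoly {ι : Type*} (t : Finset ι) (γ : ι → ℝ)
    (α : ι → ℕ) {s : ℕ} (hα : ∑ i ∈ t, α i = 2 * s + 1) :
    coeff s (oneSubPow (2 * s : ℕ) * (∏ i ∈ t, eulerPoly (γ i) (α i)).aeval cayleySeries) =
      2 ^ (2 * s) * ∏ i ∈ t, (ascPochhammer ℝ (α i)).eval (γ i + 1) := by
  rw [coeff_oneSubPow_mul_aeval_cayleySeries, ← hα,
    Polynomial.coeff_prod_sum_of_natDegree_le _ _ _ fun i _ => natDegree_eulerPoly_le _ _]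
  · simp_rw [coeff_eulerPoly_self]
  · exact hα ▸ (Polynomial.natDegree_prod_le _ _).trans
      (sum_le_sum fun i _ => natDegree_eulerPoly_le _ _)
  · simp_rw [Polynomial.prod_comp, eulerPoly_comp_neg_X, prod_mul_distrib, prod_pow_eq_pow_sum,
      hα, pow_succ, (even_two_mul s).neg_one_pow]
    ring

/-- The Heo–Xu identity (KK1) from the theory of cubature formulas. -/
theorem heo_xu_identity (d s : ℕ) (α : Fin (d + 1) → ℕ) (γ : Fin (d + 1) → ℝ)
    (hα : ∑ i, α i = 2 * s + 1) :
    2 ^ (2 * s) * ∏ i, (((α i).factorial : ℝ) * genChoose ((α i : ℝ) + γ i) (α i)) =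
      ∑ j ∈ Finset.range (s + 1), (-1 : ℝ) ^ j *
        genChoose ((d : ℝ) + ∑ i, ((α i : ℝ) + γ i)) j *
        ∑ β ∈ Finset.Nat.antidiagonalTuple (d + 1) (s - j),
          ∏ i, genChoose ((β i : ℝ) + γ i) (β i) * (2 * (β i : ℝ) + γ i + 1) ^ (α i) := by
  have hexp : (d : ℝ) + ∑ i, ((α i : ℝ) + γ i) + ∑ i, -(γ i + 1) = ((2 * s : ℕ) : ℝ) := by
    simp only [sum_add_distrib, sum_neg_distrib, ← Nat.cast_sum, hα, sum_const, card_univ,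
      Fintype.card_fin]
    push_cast
    ring
  calc _ = 2 ^ (2 * s) * ∏ i, (ascPochhammer ℝ (α i)).eval (γ i + 1) := by
        simp_rw [factorial_mul_genChoose_add_self]
    _ = coeff s (oneSubPow (2 * s : ℕ) * (∏ i, eulerPoly (γ i) (α i)).aeval cayleySeries) :=
        (coeff_oneSubPow_mul_aeval_prod_eulerPoly _ _ _ hα).symm
    _ = coeff s (oneSubPow (d + ∑ i, (α i + γ i)) *
          ∏ i, (eulerOp (γ i))^[α i] (oneSubPow (-(γ i + 1)))) := by
        simp_rw [iterate_eulerOp_oneSubPow, prod_mul_distrib, ← oneSubPow_sum, ← mul_assoc,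
          ← oneSubPow_add, hexp, map_prod]
    _ = _ := by
        rw [coeff_mul, Finset.Nat.sum_antidiagonal_eq_sum_range_succ_mk]
        refine sum_congr rfl fun j _ => ?_
        rw [coeff_oneSubPow, coeff_prod_fin_eq_sum_antidiagonalTuple, genChoose_eq_ringChoose]
        refine congrArg _ (sum_congr rfl fun β _ => prod_congr rfl fun i _ => ?_)
        rw [coeff_iterate_eulerOp, coeff_oneSubPow_neg, genChoose_eq_ringChoose, mul_comm]
        ring_nf
end

section
/- For all natural numbers n and s, the following identity holds in ℚ: Σ_{k=1}^{⌊n/2⌋} Σ_{q=1}^{min(2k,s)} C(s,q)·2^{q−1}·C(k−1, q−1) + Σ_{m=1}^{n} Σ_{q=1}^{min(m,s)} 2^{q−1}·C(s,q)·C(m−1, q−1) = −1 + Σ_{q=0}^{s} 2^{q−1}·C(s,q)·( C(n,q) + C(⌊n/2⌋, q) ). -/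
open Finset

lemma hockey_s9 (N r : ℕ) : ∑ j ∈ Finset.range N, (j.choose r : ℚ) = (N.choose (r+1) : ℚ) := by
  induction N with
  | zero => simp
  | succ N ih =>
      rw [Finset.sum_range_succ, ih, Nat.choose_succ_succ' N r]
      push_cast; ring

lemma inner_ext (k t s : ℕ) (hk : 1 ≤ k) (ht : k ≤ t) :
    ∑ q ∈ Finset.Icc 1 (min t s), (2:ℚ)^((q:ℤ)-1) * (s.choose q : ℚ) * ((k-1).choose (q-1) : ℚ)
    = ∑ q ∈ Finset.Icc 1 s, (2:ℚ)^((q:ℤ)-1) * (s.choose q : ℚ) * ((k-1).choose (q-1) : ℚ) := by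
  apply Finset.sum_subset
  · exact Finset.Icc_subset_Icc_right (min_le_right _ _)
  · intro q hq hq'
    simp only [Finset.mem_Icc] at hq hq'
    have hqt : t < q := by
      by_contra h
      exact hq' ⟨hq.1, le_min (le_of_not_gt h) hq.2⟩
    have : k - 1 < q - 1 := by omega
    rw [Nat.choose_eq_zero_of_lt this]
    simp

lemma aux (N s : ℕ) :
    ∑ m ∈ Finset.Icc 1 N, ∑ q ∈ Finset.Icc 1 s,
      (2:ℚ)^((q:ℤ)-1) * (s.choose q : ℚ) * ((m-1).choose (q-1) : ℚ)
    = ∑ q ∈ Finset.Icc 1 s, (2:ℚ)^((q:ℤ)-1) * (s.choose q : ℚ) * (N.choose q : ℚ) := by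
  rw [Finset.sum_comm]
  apply Finset.sum_congr rfl
  intro q hq
  simp only [Finset.mem_Icc] at hq
  rw [← Finset.mul_sum]
  congr 1
  have : ∑ m ∈ Finset.Icc 1 N, ((m-1).choose (q-1) : ℚ)
      = ∑ j ∈ Finset.range N, (j.choose (q-1) : ℚ) := by
    apply Finset.sum_nbij' (fun m => m - 1) (fun j => j + 1) <;>
      (intro a ha; simp only [Finset.mem_Icc, Finset.mem_range] at *) <;> omega
  rw [this, hockey_s9, show q - 1 + 1 = q from by omega]

/-- The Corollary following Lemma (lem6a) in the paper. -/
theorem corollary_lem6a (n s : ℕ) :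
    (∑ k ∈ Finset.Icc 1 (n / 2), ∑ q ∈ Finset.Icc 1 (min (2 * k) s),
        (Nat.choose s q : ℚ) * (2 : ℚ) ^ ((q : ℤ) - 1) * (Nat.choose (k - 1) (q - 1) : ℚ)) +
    (∑ m ∈ Finset.Icc 1 n, ∑ q ∈ Finset.Icc 1 (min m s),
        (2 : ℚ) ^ ((q : ℤ) - 1) * (Nat.choose s q : ℚ) * (Nat.choose (m - 1) (q - 1) : ℚ)) =
    -1 + ∑ q ∈ Finset.range (s + 1),
        (2 : ℚ) ^ ((q : ℤ) - 1) * (Nat.choose s q : ℚ) *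
          ((Nat.choose n q : ℚ) + (Nat.choose (n / 2) q : ℚ)) := by
  have h1 : (∑ k ∈ Finset.Icc 1 (n / 2), ∑ q ∈ Finset.Icc 1 (min (2 * k) s),
        (Nat.choose s q : ℚ) * (2 : ℚ) ^ ((q : ℤ) - 1) * (Nat.choose (k - 1) (q - 1) : ℚ))
      = ∑ q ∈ Finset.Icc 1 s, (2:ℚ)^((q:ℤ)-1) * (s.choose q : ℚ) * ((n/2).choose q : ℚ) := by
    rw [← aux (n/2) s]
    apply Finset.sum_congr rfl
    intro k hk
    simp only [Finset.mem_Icc] at hk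
    rw [show (∑ q ∈ Finset.Icc 1 (min (2 * k) s),
        (Nat.choose s q : ℚ) * (2 : ℚ) ^ ((q : ℤ) - 1) * (Nat.choose (k - 1) (q - 1) : ℚ))
      = ∑ q ∈ Finset.Icc 1 (min (2 * k) s),
        (2 : ℚ) ^ ((q : ℤ) - 1) * (Nat.choose s q : ℚ) * (Nat.choose (k - 1) (q - 1) : ℚ)
      from Finset.sum_congr rfl (fun q _ => by ring)]
    exact inner_ext k (2*k) s hk.1 (by omega)
  have h2 : (∑ m ∈ Finset.Icc 1 n, ∑ q ∈ Finset.Icc 1 (min m s),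
        (2 : ℚ) ^ ((q : ℤ) - 1) * (Nat.choose s q : ℚ) * (Nat.choose (m - 1) (q - 1) : ℚ))
      = ∑ q ∈ Finset.Icc 1 s, (2:ℚ)^((q:ℤ)-1) * (s.choose q : ℚ) * (n.choose q : ℚ) := by
    rw [← aux n s]
    apply Finset.sum_congr rfl
    intro m hm
    simp only [Finset.mem_Icc] at hm
    exact inner_ext m m s hm.1 le_rfl
  rw [h1, h2]
  have h3 : Finset.range (s+1) = insert 0 (Finset.Icc 1 s) := by
    ext x; simp [Finset.mem_Icc, Finset.mem_range]; omega
  rw [h3, Finset.sum_insert (by simp)]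
  have h0 : (2 : ℚ) ^ ((0 : ℤ) - 1) * (s.choose 0 : ℚ) * ((n.choose 0 : ℚ) + ((n/2).choose 0 : ℚ)) = 1 := by
    norm_num
  push_cast at h0 ⊢
  rw [h0]
  rw [← Finset.sum_add_distrib]
  ring_nf
  apply Finset.sum_congr rfl
  intro q hq
  ring
end

section
/- For all natural numbers n and s, Σ_{k=1}^{⌊n/2⌋} Σ_{q=1}^{min(2k,s)} C(s,q)·C(k−1, q−1) = C(s+⌊n/2⌋, s) − 1 (an identity of integers). -/
lemma aux_inner (s k : ℕ) (hk : 1 ≤ k) :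
    ∑ q ∈ Finset.Icc 1 (min (2 * k) s), s.choose q * (k - 1).choose (q - 1)
      = (s + (k - 1)).choose k := by
  rw [Nat.add_choose_eq,
    Finset.Nat.sum_antidiagonal_eq_sum_range_succ (fun i j => s.choose i * (k - 1).choose j)]
  have hC : ∑ i ∈ Finset.range (k + 1), s.choose i * (k - 1).choose (k - i)
      = ∑ i ∈ Finset.Icc 1 k, s.choose i * (k - 1).choose (i - 1) := by
    rw [Finset.sum_range_succ']
    have h0 : (k - 1).choose (k - 0) = 0 := Nat.choose_eq_zero_of_lt (by omega)
    rw [h0, ← Finset.Ico_add_one_right_eq_Icc, Finset.sum_Ico_eq_sum_range]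
    simp only [Nat.mul_zero, Nat.choose_zero_right, Nat.add_sub_cancel, mul_zero, add_zero]
    apply Finset.sum_congr rfl
    intro i hi
    simp only [Finset.mem_range] at hi
    have : k - (i + 1) = (k - 1) - i := by omega
    rw [this, Nat.choose_symm (by omega), add_comm 1 i]
    simp
  rw [hC]
  -- extend both sums to Icc 1 (max k s) and compare
  have key : ∀ M : ℕ, k ≤ M → s ≤ M →
      ∑ q ∈ Finset.Icc 1 (min (2 * k) s), s.choose q * (k - 1).choose (q - 1)
        = ∑ q ∈ Finset.Icc 1 k, s.choose q * (k - 1).choose (q - 1) := by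
    intro M hkM hsM
    rw [Finset.sum_subset (Finset.Icc_subset_Icc_right (le_trans (min_le_right _ _) hsM)),
      Finset.sum_subset (Finset.Icc_subset_Icc_right hkM)]
    · intro q hq hq'
      simp only [Finset.mem_Icc] at hq hq'
      have : k < q := by omega
      have : (k - 1).choose (q - 1) = 0 := Nat.choose_eq_zero_of_lt (by omega)
      rw [this, mul_zero]
    · intro q hq hq'
      simp only [Finset.mem_Icc, lt_min_iff, not_and, not_le] at hq hq'
      rcases Nat.lt_or_ge s q with h | h
      · rw [Nat.choose_eq_zero_of_lt h, zero_mul]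
      · have : 2 * k < q := by omega
        have : (k - 1).choose (q - 1) = 0 := Nat.choose_eq_zero_of_lt (by omega)
        rw [this, mul_zero]
  exact key (max k s) (le_max_left _ _) (le_max_right _ _)

lemma hockey_s10 (s N : ℕ) :
    (∑ k ∈ Finset.Icc 1 N, (s + (k - 1)).choose k) + 1 = (s + N).choose s := by
  induction N with
  | zero => simp
  | succ N ih =>
    rw [Finset.sum_Icc_succ_top (by omega)]
    have h1 : (s + (N + 1 - 1)).choose (N + 1) = (s + N).choose (N + 1) := by
      congr 1
    have h2 : (s + (N + 1)).choose s = (s + N).choose s + (s + N).choose (N + 1) := by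
      have e1 : (s + N + 1).choose s = (s + N + 1).choose (N + 1) := by
        have := Nat.choose_symm (n := s + N + 1) (k := s) (by omega)
        rw [show s + N + 1 - s = N + 1 by omega] at this
        exact this.symm
      have e2 : (s + N).choose N = (s + N).choose s := by
        have := Nat.choose_symm (n := s + N) (k := s) (by omega)
        rw [show s + N - s = N by omega] at this
        exact this
      rw [show s + (N + 1) = s + N + 1 by ring, e1, Nat.choose_succ_succ, e2]
    omega

/-- The paper's Lemma 1 (formula (S4)). -/
theorem lemma_S4 (n s : ℕ) :
    (∑ k ∈ Finset.Icc 1 (n / 2), ∑ q ∈ Finset.Icc 1 (min (2 * k) s),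
        (Nat.choose s q : ℤ) * (Nat.choose (k - 1) (q - 1) : ℤ)) =
      (Nat.choose (s + n / 2) s : ℤ) - 1 := by
  have h : ∀ k ∈ Finset.Icc 1 (n / 2),
      (∑ q ∈ Finset.Icc 1 (min (2 * k) s),
        (Nat.choose s q : ℤ) * (Nat.choose (k - 1) (q - 1) : ℤ))
        = ((s + (k - 1)).choose k : ℤ) := by
    intro k hk
    simp only [Finset.mem_Icc] at hk
    rw [← aux_inner s k hk.1]
    push_cast
    rfl
  rw [Finset.sum_congr rfl h]
  have := hockey_s10 s (n / 2)
  have : ((∑ k ∈ Finset.Icc 1 (n / 2), (s + (k - 1)).choose k : ℕ) : ℤ) + 1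
      = ((s + n / 2).choose s : ℤ) := by exact_mod_cast congrArg (Nat.cast : ℕ → ℤ) this
  push_cast at this
  omega
end

section
/- For all natural numbers n and s, Σ_{m=1}^{n} Σ_{q=1}^{min(m,s)} C(s,q) · Σ_{(n₁,…,n_q) ∈ Ω_q(m)} ∏_{j=1}^{q}(n_j+1) = C(2s+n, n) − 1 (an identity of integers). -/
/-!
Let `φ = partSeries = ∑_{k ≥ 1} (k + 1) X^k = (1 - X)⁻² - 1`. The sum over compositions of `m`
into `q` parts is the coefficient of `X^m` in `φ^q`, so by the binomial theorem the sum over `q`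
is the coefficient of `X^m` in `(1 + φ)^s = (1 - X)^{-2s}` when `m ≥ 1`. Summing the coefficients of
degree `1, …, n` amounts to multiplying by `(1 - X)⁻¹` and dropping the constant term, which leaves
`[X^n] (1 - X)^{-(2s+1)} - 1 = C(2s + n, n) - 1`.
-/

open Finset PowerSeries

namespace PowerSeries

section CommSemiring

variable {R : Type*} [CommSemiring R]

theorem coeff_pow_eq_sum_antidiagonalTuple_s12 (φ : R⟦X⟧) (q m : ℕ) :
    coeff m (φ ^ q) = ∑ f ∈ Nat.antidiagonalTuple q m, ∏ j, coeff (f j) φ := by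
  classical
  rw [← piAntidiag_univ_fin_eq_antidiagonalTuple, ← Fin.prod_const, coeff_prod, finsuppAntidiag,
    sum_map, ← sum_attach (piAntidiag _ _)]
  rfl

theorem coeff_pow_eq_sum_pos_antidiagonalTuple {φ : R⟦X⟧} (hφ : constantCoeff φ = 0) (q m : ℕ) :
    coeff m (φ ^ q) =
      ∑ f ∈ (Nat.antidiagonalTuple q m).filter (fun f => ∀ j, 0 < f j), ∏ j, coeff (f j) φ := by
  rw [coeff_pow_eq_sum_antidiagonalTuple_s12, sum_filter_of_ne]
  intro f _ hprod j
  refine Nat.pos_of_ne_zero fun hj => hprod (prod_eq_zero (mem_univ j) ?_)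
  rwa [hj, coeff_zero_eq_constantCoeff]

theorem coeff_pow_eq_zero_of_lt {φ : R⟦X⟧} (hφ : constantCoeff φ = 0) {q m : ℕ} (h : m < q) :
    coeff m (φ ^ q) = 0 :=
  X_pow_dvd_iff.mp (pow_dvd_pow_of_dvd (X_dvd_iff.mpr hφ) q) m h

theorem coeff_one_add_pow {φ : R⟦X⟧} (hφ : constantCoeff φ = 0) (s : ℕ) {m : ℕ} (hm : m ≠ 0) :
    coeff m ((1 + φ) ^ s) = ∑ q ∈ Icc 1 (min m s), (s.choose q : R) * coeff m (φ ^ q) := by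
  have hsub : Icc 1 (min m s) ⊆ range (s + 1) := fun q hq => by
    simp only [mem_Icc, mem_range] at hq ⊢; omega
  rw [add_comm, add_pow, map_sum, sum_subset hsub]
  · refine sum_congr rfl fun q _ => ?_
    rw [one_pow, mul_one, ← map_natCast (C (R := R)), coeff_mul_C, mul_comm]
  · intro q hq hq'
    simp only [mem_range, mem_Icc, not_and_or, not_le] at hq hq'
    obtain h0 | hlt : q = 0 ∨ m < q := by omega
    · simp [h0, coeff_one, hm]
    · rw [coeff_pow_eq_zero_of_lt hφ hlt, mul_zero]

theorem coeff_mul_mk_one (φ : R⟦X⟧) (n : ℕ) :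
    coeff n (φ * mk 1) = ∑ m ∈ range (n + 1), coeff m φ := by
  simp [coeff_mul, Nat.sum_antidiagonal_eq_sum_range_succ_mk]

end CommSemiring

section CommRing

variable {R : Type*} [CommRing R]

theorem sum_Icc_one_coeff (φ : R⟦X⟧) (n : ℕ) :
    ∑ m ∈ Icc 1 n, coeff m φ = coeff n (φ * mk 1) - constantCoeff φ := by
  rw [coeff_mul_mk_one, Nat.range_succ_eq_Icc_zero, ← sum_Ioc_add_eq_sum_Icc n.zero_le,
    coeff_zero_eq_constantCoeff, add_sub_cancel_right]
  rfl

variable (R) in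
noncomputable def partSeries : R⟦X⟧ := mk 1 ^ 2 - 1

theorem one_add_partSeries : 1 + partSeries R = mk 1 ^ 2 := by
  rw [partSeries, add_sub_cancel]

theorem constantCoeff_partSeries : constantCoeff (partSeries R) = 0 := by
  simp [partSeries]

theorem coeff_partSeries {k : ℕ} (hk : k ≠ 0) : coeff k (partSeries R) = k + 1 := by
  rw [partSeries, map_sub, mk_one_pow_eq_mk_choose_add R 1]
  simp [coeff_one, hk]
  ring

theorem coeff_partSeries_pow (q m : ℕ) :
    coeff m (partSeries R ^ q) =
      ∑ f ∈ (Nat.antidiagonalTuple q m).filter (fun f => ∀ j, 0 < f j), ∏ j, ((f j : R) + 1) := by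
  rw [coeff_pow_eq_sum_pos_antidiagonalTuple constantCoeff_partSeries]
  refine sum_congr rfl fun f hf => prod_congr rfl fun j _ => ?_
  rw [coeff_partSeries ((mem_filter.mp hf).2 j).ne']

end CommRing

end PowerSeries

/-- The paper's Lemma (lem5): the sum over compositions of products `∏ (n_j + 1)`
evaluates to `C(2s+n, n) - 1`. -/
theorem lemma_S4_sum (n s : ℕ) :
    (∑ m ∈ Finset.Icc 1 n, ∑ q ∈ Finset.Icc 1 (min m s),
        (Nat.choose s q : ℤ) *
          ∑ f ∈ (Finset.Nat.antidiagonalTuple q m).filter (fun f => ∀ j, 0 < f j),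
            ∏ j, ((f j : ℤ) + 1)) =
      (Nat.choose (2 * s + n) n : ℤ) - 1 := by
  calc _ = ∑ m ∈ Icc 1 n, coeff m ((1 + partSeries ℤ) ^ s) := by
        refine sum_congr rfl fun m hm => ?_
        simp_rw [← coeff_partSeries_pow]
        have hm0 : m ≠ 0 := Nat.one_le_iff_ne_zero.mp (mem_Icc.mp hm).1
        rw [coeff_one_add_pow constantCoeff_partSeries s hm0]
    _ = coeff n (PowerSeries.mk 1 ^ (2 * s + 1)) - 1 := by
        rw [sum_Icc_one_coeff, one_add_partSeries, ← pow_mul, ← pow_succ, map_pow constantCoeff]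
        simp
    _ = _ := by
        rw [mk_one_pow_eq_mk_choose_add, coeff_mk, Nat.choose_symm_add]
end

section
/- For all natural numbers n and s, Σ_{m=1}^{n} Σ_{q=1}^{min(m,s)} C(s,q) · E_q(m) = C(s+⌊n/2⌋, s) − 1 (an identity of integers), where E_q(m) denotes the number of ordered q-tuples (n₁,…,n_q) of positive even integers with n₁+⋯+n_q = m. -/
/-!
Halving every part and subtracting one turns a composition of `2 (k + 1)` into `q + 1` positive
even parts into a composition of `k - q` into `q + 1` nonnegative parts, so by stars and bars
there are `C(k, q)` of them, while odd numbers have none. Vandermonde's identity then sums the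
contribution of `m = 2 (k + 1)` to `C(s + k, k + 1)`, and by Pascal's rule these contributions
telescope to `C(s + ⌊n/2⌋, s) - 1`.
-/

open Finset

namespace Finset.Nat

theorem card_antidiagonalTuple (k n : ℕ) : #(antidiagonalTuple k n) = k.multichoose n := by
  rw [← Fintype.card_coe, Fintype.card_congr <|
    (Equiv.subtypeEquivRight fun _ => mem_antidiagonalTuple).trans
      (Sym.equivNatSumOfFintype (Fin k) n).symm, Sym.card_sym_eq_multichoose, Fintype.card_fin]

end Finset.Nat

def evenCompositions (q m : ℕ) : Finset (Fin q → ℕ) :=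
  (Finset.Nat.antidiagonalTuple q m).filter fun f => ∀ j, 0 < f j ∧ Even (f j)

lemma mem_evenCompositions {q m : ℕ} {f : Fin q → ℕ} :
    f ∈ evenCompositions q m ↔ ∑ j, f j = m ∧ ∀ j, 0 < f j ∧ Even (f j) := by
  rw [evenCompositions, mem_filter, Finset.Nat.mem_antidiagonalTuple]

lemma evenCompositions_eq_empty_of_odd {q m : ℕ} (hm : Odd m) : evenCompositions q m = ∅ := by
  refine eq_empty_of_forall_notMem fun f hf => ?_
  rw [mem_evenCompositions] at hf
  exact Nat.not_even_iff_odd.mpr hm (hf.1 ▸ even_sum _ fun j _ => (hf.2 j).2)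

lemma evenCompositions_eq_empty_of_lt {q m : ℕ} (hm : m < 2 * q) : evenCompositions q m = ∅ := by
  refine eq_empty_of_forall_notMem fun f hf => ?_
  rw [mem_evenCompositions] at hf
  have h2 : ∀ j, 2 ≤ f j := fun j => by
    obtain ⟨hpos, c, hc⟩ := hf.2 j
    omega
  have : 2 * q ≤ m := by
    simpa [← hf.1, mul_comm] using sum_le_sum fun j (_ : j ∈ univ) => h2 j
  omega

lemma sum_two_mul_add_one {q : ℕ} (g : Fin q → ℕ) : ∑ j, 2 * (g j + 1) = 2 * (∑ j, g j + q) := by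
  simp only [mul_add, mul_one, sum_add_distrib, ← mul_sum, sum_const, card_univ,
    Fintype.card_fin, smul_eq_mul]
  ring

lemma card_evenCompositions_two_mul_add (q r : ℕ) :
    #(evenCompositions q (2 * (q + r))) = #(Finset.Nat.antidiagonalTuple q r) := by
  symm
  refine card_nbij' (fun g j => 2 * (g j + 1)) (fun f j => f j / 2 - 1) ?_ ?_ ?_ ?_
  · intro g hg
    rw [mem_coe, Finset.Nat.mem_antidiagonalTuple] at hg
    dsimp only
    rw [mem_coe, mem_evenCompositions, sum_two_mul_add_one, hg]
    exact ⟨by ring, fun j => ⟨by omega, even_two_mul _⟩⟩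
  · intro f hf
    rw [mem_coe, mem_evenCompositions] at hf
    dsimp only
    have hf' : f = fun j => 2 * (f j / 2 - 1 + 1) := funext fun j => by
      obtain ⟨hpos, c, hc⟩ := hf.2 j
      omega
    have hsum := hf.1
    rw [hf', sum_two_mul_add_one] at hsum
    rw [mem_coe, Finset.Nat.mem_antidiagonalTuple]
    omega
  · intro g _
    funext j
    dsimp only
    omega
  · intro f hf
    rw [mem_coe, mem_evenCompositions] at hf
    funext j
    obtain ⟨hpos, c, hc⟩ := hf.2 j
    dsimp only
    omega

lemma card_evenCompositions_succ_two_mul_succ (q k : ℕ) :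
    #(evenCompositions (q + 1) (2 * (k + 1))) = k.choose q := by
  rcases le_or_gt q k with hqk | hkq
  · obtain ⟨r, rfl⟩ := Nat.exists_eq_add_of_le hqk
    rw [show q + r + 1 = q + 1 + r by omega, card_evenCompositions_two_mul_add,
      Finset.Nat.card_antidiagonalTuple, Nat.multichoose_eq, show q + 1 + r - 1 = q + r by omega,
      Nat.choose_symm_add]
  · rw [evenCompositions_eq_empty_of_lt (by omega), card_empty, Nat.choose_eq_zero_of_lt hkq]

lemma sum_Icc_min_choose_mul (m s : ℕ) (f : ℕ → ℕ) :
    ∑ q ∈ Icc 1 (min m s), s.choose q * f q = ∑ q ∈ Icc 1 m, s.choose q * f q := by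
  refine sum_subset (Icc_subset_Icc_right (min_le_left m s)) fun q hq hq' => ?_
  rw [mem_Icc] at hq hq'
  rw [Nat.choose_eq_zero_of_lt (by omega), zero_mul]

theorem Nat.sum_range_choose_succ_mul_choose (s k : ℕ) :
    ∑ i ∈ range (k + 1), s.choose (i + 1) * k.choose i = (s + k).choose (k + 1) := by
  rw [Nat.add_choose_eq, Finset.Nat.sum_antidiagonal_succ,
    Finset.Nat.sum_antidiagonal_eq_sum_range_succ_mk, Nat.choose_succ_self, mul_zero, zero_add]
  refine sum_congr rfl fun i hi => ?_
  rw [Nat.choose_symm_of_eq_add (Nat.add_sub_of_le (mem_range_succ_iff.mp hi)).symm]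

lemma sum_choose_mul_card_evenCompositions (s k : ℕ) :
    ∑ q ∈ Icc 1 (min (2 * (k + 1)) s), s.choose q * #(evenCompositions q (2 * (k + 1)))
      = (s + k).choose (k + 1) := by
  rw [sum_Icc_min_choose_mul, ← Ico_add_one_right_eq_Icc, sum_Ico_eq_sum_range,
    add_tsub_cancel_right, show range (2 * (k + 1)) = range ((k + 1) + (k + 1)) by ring_nf,
    sum_range_add, ← Nat.sum_range_choose_succ_mul_choose]
  have hvanish : ∀ i ∈ range (k + 1),
      s.choose (1 + (k + 1 + i)) * #(evenCompositions (1 + (k + 1 + i)) (2 * (k + 1))) = 0 :=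
    fun i _ => by rw [evenCompositions_eq_empty_of_lt (by omega), card_empty, mul_zero]
  rw [sum_eq_zero hvanish, add_zero]
  exact sum_congr rfl fun i _ => by rw [add_comm 1 i, card_evenCompositions_succ_two_mul_succ]

theorem sum_sum_choose_mul_card_evenCompositions (n s : ℕ) :
    ∑ m ∈ Icc 1 n, ∑ q ∈ Icc 1 (min m s), s.choose q * #(evenCompositions q m) + 1
      = (s + n / 2).choose s := by
  induction n with
  | zero => simp
  | succ n ih =>
    rw [sum_Icc_succ_top (by omega), add_right_comm, ih]
    rcases Nat.even_or_odd' n with ⟨k, rfl | rfl⟩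
    · simp only [evenCompositions_eq_empty_of_odd (odd_two_mul_add_one k), card_empty, mul_zero,
        sum_const_zero, add_zero]
      rw [show (2 * k + 1) / 2 = 2 * k / 2 by omega]
    · rw [show 2 * k + 1 + 1 = 2 * (k + 1) by ring, sum_choose_mul_card_evenCompositions,
        show (2 * k + 1) / 2 = k by omega, show 2 * (k + 1) / 2 = k + 1 by omega,
        Nat.choose_symm_add, Nat.choose_symm_add, ← add_assoc, Nat.choose_succ_succ']

/-- The paper's Lemma (lemma4): `Σ_m Σ_q C(s,q)·|Ω″_q(m)| = C(s+⌊n/2⌋, s) - 1`, where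
`|Ω″_q(m)|` is the number of compositions of `m` into `q` positive even parts. -/
theorem lemma_S5_sum (n s : ℕ) :
    (∑ m ∈ Finset.Icc 1 n, ∑ q ∈ Finset.Icc 1 (min m s),
        (Nat.choose s q : ℤ) *
          (((Finset.Nat.antidiagonalTuple q m).filter
              (fun f => ∀ j, 0 < f j ∧ Even (f j))).card : ℤ)) =
      (Nat.choose (s + n / 2) s : ℤ) - 1 := by
  rw [eq_sub_iff_add_eq]
  exact_mod_cast sum_sum_choose_mul_card_evenCompositions n s
end

section
/- For all natural numbers n and s, the following identity holds in ℚ: Σ_{m=1}^{n} Σ_{q=1}^{min(m,s)} C(s,q)·2^{q−1}·C(m−1, q−1) = −1/2 + Σ_{q=0}^{s} 2^{q−1}·C(s,q)·C(n,q). -/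
/-- Formula (ssum6) of the paper's Lemma (lem6a): `S₆(n,s) = S(n,s)`. -/
theorem lemma_ssum6 (n s : ℕ) :
    ∑ m ∈ Finset.Icc 1 n, ∑ q ∈ Finset.Icc 1 (min m s),
        (Nat.choose s q : ℚ) * (2 : ℚ) ^ ((q : ℤ) - 1) * (Nat.choose (m - 1) (q - 1) : ℚ) =
      -(1 / 2) + ∑ q ∈ Finset.range (s + 1),
        (2 : ℚ) ^ ((q : ℤ) - 1) * (Nat.choose s q : ℚ) * (Nat.choose n q : ℚ) := by
  induction n with
  | zero =>
    have h : ∀ q ∈ Finset.range (s+1), q ≠ 0 →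
        (2:ℚ)^((q:ℤ)-1) * (Nat.choose s q : ℚ) * (Nat.choose 0 q : ℚ) = 0 := by
      intro q _ hq
      rcases Nat.exists_eq_succ_of_ne_zero hq with ⟨r, rfl⟩
      simp
    rw [Finset.sum_eq_single_of_mem 0 (by simp) h]
    norm_num
  | succ n ih =>
    rw [Finset.sum_Icc_succ_top (by omega : 1 ≤ n+1), ih]
    have hext : ∑ q ∈ Finset.Icc 1 (min (n+1) s),
        (Nat.choose s q : ℚ) * (2:ℚ)^((q:ℤ)-1) * (Nat.choose (n+1-1) (q-1) : ℚ)
        = ∑ q ∈ Finset.Icc 1 s,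
        (Nat.choose s q : ℚ) * (2:ℚ)^((q:ℤ)-1) * (Nat.choose n (q-1) : ℚ) := by
      simp only [Nat.add_sub_cancel]
      apply Finset.sum_subset
      · intro q hq; simp at hq ⊢; omega
      · intro q hq hq'
        simp only [Finset.mem_Icc] at hq hq'
        have : n < q - 1 := by omega
        simp [Nat.choose_eq_zero_of_lt this]
    rw [hext, ← Finset.Ico_add_one_right_eq_Icc, Finset.sum_Ico_eq_sum_range]
    rw [Finset.sum_range_succ' (fun q => (2:ℚ)^((q:ℤ)-1) * (Nat.choose s q : ℚ) * (Nat.choose (n+1) q : ℚ)),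
        Finset.sum_range_succ' (fun q => (2:ℚ)^((q:ℤ)-1) * (Nat.choose s q : ℚ) * (Nat.choose n q : ℚ))]
    have key : ∀ i ∈ Finset.range s,
        (2:ℚ)^(((i+1:ℕ):ℤ)-1) * (Nat.choose s (i+1) : ℚ) * (Nat.choose n (i+1) : ℚ)
        + (Nat.choose s (1+i) : ℚ) * (2:ℚ)^(((1+i:ℕ):ℤ)-1) * (Nat.choose n (1+i-1) : ℚ)
        = (2:ℚ)^(((i+1:ℕ):ℤ)-1) * (Nat.choose s (i+1) : ℚ) * (Nat.choose (n+1) (i+1) : ℚ) := by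
      intro i _
      rw [Nat.choose_succ_succ n i, show 1+i = i+1 by ring, Nat.add_sub_cancel]
      push_cast
      ring
    calc -(1/2) + (∑ i ∈ Finset.range s, (2:ℚ)^(((i+1:ℕ):ℤ)-1) * (Nat.choose s (i+1) : ℚ) * (Nat.choose n (i+1) : ℚ)
            + (2:ℚ)^(((0:ℕ):ℤ)-1) * (Nat.choose s 0 : ℚ) * (Nat.choose n 0 : ℚ))
          + ∑ i ∈ Finset.range s, (Nat.choose s (1+i) : ℚ) * (2:ℚ)^(((1+i:ℕ):ℤ)-1) * (Nat.choose n (1+i-1) : ℚ)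
        = -(1/2) + (∑ i ∈ Finset.range s, ((2:ℚ)^(((i+1:ℕ):ℤ)-1) * (Nat.choose s (i+1) : ℚ) * (Nat.choose n (i+1) : ℚ)
            + (Nat.choose s (1+i) : ℚ) * (2:ℚ)^(((1+i:ℕ):ℤ)-1) * (Nat.choose n (1+i-1) : ℚ))
            + (2:ℚ)^(((0:ℕ):ℤ)-1) * (Nat.choose s 0 : ℚ) * (Nat.choose n 0 : ℚ)) := by
          rw [Finset.sum_add_distrib]; ring
      _ = -(1/2) + (∑ i ∈ Finset.range s, (2:ℚ)^(((i+1:ℕ):ℤ)-1) * (Nat.choose s (i+1) : ℚ) * (Nat.choose (n+1) (i+1) : ℚ)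
            + (2:ℚ)^(((0:ℕ):ℤ)-1) * (Nat.choose s 0 : ℚ) * (Nat.choose (n+1) 0 : ℚ)) := by
          rw [Finset.sum_congr rfl key]; simp
end

section
/- For every natural number n ≥ 1, Σ_{i=2}^{n} Σ_{j=1}^{i−1} C(n−i+j−1, j−1) · C(n+i−j−1, i−1) = (n−1)·C(2n−2, n−1). -/
open Finset

lemma vanderT1 (p q d : ℕ) :
    ∑ a ∈ Finset.range (p + 1), Nat.choose p a * Nat.choose q (a + d) =
      Nat.choose (p + q) (p + d) := by
  rw [Nat.add_choose_eq, Finset.Nat.sum_antidiagonal_eq_sum_range_succ_mk]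
  rw [← Finset.sum_subset (Finset.range_subset_range.2 (by omega : p + 1 ≤ p + d + 1))
      (fun k _ hk => by
        rw [Nat.choose_eq_zero_of_lt (by simpa using hk : p < k), zero_mul])]
  rw [← Finset.sum_range_reflect]
  refine Finset.sum_congr rfl fun a ha => ?_
  have ha' : a ≤ p := Nat.lt_succ_iff.mp (Finset.mem_range.mp ha)
  simp only
  rw [show p + 1 - 1 - a = p - a by omega, Nat.choose_symm ha',
    show p - a + d = p + d - a by omega]

lemma innerSumT1 (n d : ℕ) (hd : 1 ≤ d) (hdn : d ≤ n - 1) (hn : 1 ≤ n) :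
    ∑ j ∈ Finset.Icc 1 (n - d), Nat.choose (n - d - 1) (j - 1) *
        Nat.choose (n + d - 1) (j + d - 1) =
      Nat.choose (2 * n - 2) (n - 1) := by
  rw [← Finset.Ico_add_one_right_eq_Icc, Finset.sum_Ico_eq_sum_range]
  have h1 : n - d + 1 - 1 = (n - d - 1) + 1 := by omega
  rw [h1]
  have := vanderT1 (n - d - 1) (n + d - 1) d
  rw [show (n - d - 1) + (n + d - 1) = 2 * n - 2 by omega,
    show (n - d - 1) + d = n - 1 by omega] at this
  rw [← this]
  refine Finset.sum_congr rfl fun a _ => ?_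
  rw [show 1 + a - 1 = a by omega, show 1 + a + d - 1 = a + d by omega]

/-- The paper's Lemma (Lem2, formula (28)): evaluation of the sum `T₁`. -/
theorem lemma_T1 (n : ℕ) (hn : 1 ≤ n) :
    ∑ i ∈ Finset.Icc 2 n, ∑ j ∈ Finset.Icc 1 (i - 1),
        Nat.choose (n - i + j - 1) (j - 1) * Nat.choose (n + i - j - 1) (i - 1) =
      (n - 1) * Nat.choose (2 * n - 2) (n - 1) := by
  have key : ∑ i ∈ Finset.Icc 2 n, ∑ j ∈ Finset.Icc 1 (i - 1),
        Nat.choose (n - i + j - 1) (j - 1) * Nat.choose (n + i - j - 1) (i - 1) =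
      ∑ d ∈ Finset.Icc 1 (n - 1), ∑ j ∈ Finset.Icc 1 (n - d),
        Nat.choose (n - d - 1) (j - 1) * Nat.choose (n + d - 1) (j + d - 1) := by
    rw [Finset.sum_sigma', Finset.sum_sigma']
    refine Finset.sum_nbij' (fun x => ⟨x.1 - x.2, x.2⟩) (fun x => ⟨x.2 + x.1, x.2⟩)
      ?_ ?_ ?_ ?_ ?_
    · rintro ⟨i, j⟩ h
      simp only [Finset.mem_sigma, Finset.mem_Icc] at h ⊢
      omega
    · rintro ⟨d, j⟩ h
      simp only [Finset.mem_sigma, Finset.mem_Icc] at h ⊢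
      omega
    · rintro ⟨i, j⟩ h
      simp only [Finset.mem_sigma, Finset.mem_Icc] at h
      simp only
      rw [show j + (i - j) = i by omega]
    · rintro ⟨d, j⟩ h
      simp only [Finset.mem_sigma, Finset.mem_Icc] at h
      simp only
      rw [show j + d - j = d by omega]
    · rintro ⟨i, j⟩ h
      simp only [Finset.mem_sigma, Finset.mem_Icc] at h
      simp only
      rw [show n - (i - j) - 1 = n - i + j - 1 by omega,
        show n + (i - j) - 1 = n + i - j - 1 by omega,
        show j + (i - j) - 1 = i - 1 by omega]
  have step : ∀ d ∈ Finset.Icc 1 (n - 1),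
      ∑ j ∈ Finset.Icc 1 (n - d), Nat.choose (n - d - 1) (j - 1) *
          Nat.choose (n + d - 1) (j + d - 1) = Nat.choose (2 * n - 2) (n - 1) := by
    intro d hd
    rw [Finset.mem_Icc] at hd
    exact innerSumT1 n d hd.1 hd.2 hn
  rw [key, Finset.sum_congr rfl step, Finset.sum_const, Nat.card_Icc, smul_eq_mul]
  simp
end

section
/- For every natural number n ≥ 1, the following identity holds in ℤ: Σ_{i=2}^{n} Σ_{j=i}^{n} C(i−1+n−j, n−j) · ( C(n−i+j, j) − C(n−i+j, j+1) ) = −(n−1) − C(2n, n) + 2·C(2n, n+1). -/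
/-!
Substituting `s = i - 1 + n - j`, `b = n - j` turns the sum into
`∑_{s<n} ∑_{b<s} C(s,b) D(2n-1-s, n-b)` with `D(a,k) = C(a,k) - C(a,k+1)` (`chooseDiff`).
The inner sum is a Vandermonde convolution missing its top term, so it equals
`D(2n-1,n) - D(2n-1-s,n-s)`. The correction terms telescope by Pascal's rule to
`D(2n,n) + n - 1`, and the ballot formula `(a+1) D(a,k) = (2k+1-a) C(a+1,k+1)` gives
`n D(2n-1,n) = C(2n,n+1)`.
-/

open Finset

def chooseDiff (a k : ℕ) : ℤ := a.choose k - a.choose (k + 1)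

lemma chooseDiff_succ_succ (a k : ℕ) :
    chooseDiff (a + 1) (k + 1) = chooseDiff a k + chooseDiff a (k + 1) := by
  simp only [chooseDiff, Nat.choose_succ_succ', Nat.cast_add]
  ring

lemma chooseDiff_zero_right (a : ℕ) : chooseDiff a 0 = 1 - a := by
  simp [chooseDiff]

lemma sum_range_chooseDiff_add (r k : ℕ) :
    ∑ t ∈ range (k + 1), chooseDiff (r + t) t = chooseDiff (r + k + 1) k + 1 := by
  induction k with
  | zero =>
    simp only [zero_add, sum_range_one, add_zero, chooseDiff_zero_right, Nat.cast_add, Nat.cast_one]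
    ring
  | succ k ih =>
    rw [sum_range_succ, ih, show r + (k + 1) + 1 = r + k + 1 + 1 by ring, chooseDiff_succ_succ,
      ← add_assoc r k 1]
    ring

lemma sum_range_chooseDiff_sub (r k : ℕ) :
    ∑ s ∈ range k, chooseDiff (r + k - s) (k - s) = chooseDiff (r + k + 1) k + r := by
  have hreflect : ∑ s ∈ range k, chooseDiff (r + k - s) (k - s) =
      ∑ t ∈ range k, chooseDiff (r + (t + 1)) (t + 1) := by
    rw [← sum_range_reflect]
    refine sum_congr rfl fun s hs => ?_
    rw [mem_range] at hs
    congr 1 <;> omega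
  have htotal := sum_range_chooseDiff_add r k
  rw [sum_range_succ', add_zero, chooseDiff_zero_right] at htotal
  rw [hreflect]
  linarith

lemma add_one_mul_chooseDiff (a k : ℕ) :
    (a + 1 : ℤ) * chooseDiff a k = (2 * k + 1 - a) * (a + 1).choose (k + 1) := by
  rcases lt_or_ge a k with hak | hka
  · simp [chooseDiff, Nat.choose_eq_zero_of_lt, hak, hak.trans (Nat.lt_succ_self k)]
  have habsorb : ((a.choose (k + 1) : ℕ) : ℤ) * (k + 1) = a.choose k * (a - k) := by
    exact_mod_cast Nat.choose_succ_right_eq a k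
  have hpascal : (a + 1 : ℤ) * a.choose k = (a + 1).choose (k + 1) * (k + 1) := by
    exact_mod_cast Nat.add_one_mul_choose_eq a k
  refine mul_right_cancel₀ (b := (k + 1 : ℤ)) (by positivity) ?_
  rw [chooseDiff]
  linear_combination (-(a + 1 : ℤ)) * habsorb + (2 * k + 1 - a : ℤ) * hpascal

lemma sum_range_choose_mul_choose (s a N : ℕ) (h : s ≤ N) :
    ∑ b ∈ range (s + 1), s.choose b * a.choose (N - b) = (s + a).choose N := by
  rw [Nat.add_choose_eq, Nat.sum_antidiagonal_eq_sum_range_succ_mk]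
  refine sum_subset (range_subset_range.mpr (by omega)) fun b _ hb => ?_
  rw [Nat.choose_eq_zero_of_lt (by simpa using hb), zero_mul]

lemma sum_range_choose_mul_chooseDiff (s a N : ℕ) (h : s ≤ N) :
    ∑ b ∈ range s, (s.choose b : ℤ) * chooseDiff a (N - b) =
      chooseDiff (s + a) N - chooseDiff a (N - s) := by
  have hfull : ∑ b ∈ range (s + 1), (s.choose b : ℤ) * chooseDiff a (N - b) =
      chooseDiff (s + a) N := by
    have hN := sum_range_choose_mul_choose s a N h
    have hN1 := sum_range_choose_mul_choose s a (N + 1) (by omega)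
    simp only [chooseDiff, ← hN, ← hN1, Nat.cast_sum, Nat.cast_mul, mul_sub, ← sum_sub_distrib]
    refine sum_congr rfl fun b hb => ?_
    rw [mem_range] at hb
    rw [show N + 1 - b = N - b + 1 by omega]
  rw [sum_range_succ, Nat.choose_self, Nat.cast_one, one_mul] at hfull
  linarith

lemma sum_Icc_Icc_eq_sum_range_range {M : Type*} [AddCommMonoid M] (n : ℕ) (g : ℕ → ℕ → M) :
    ∑ i ∈ Icc 2 n, ∑ j ∈ Icc i n, g i j = ∑ s ∈ range n, ∑ b ∈ range s, g (s + 1 - b) (n - b) := by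
  rw [sum_sigma', sum_sigma']
  refine sum_nbij' (fun p => ⟨p.1 - 1 + n - p.2, n - p.2⟩) (fun p => ⟨p.1 + 1 - p.2, n - p.2⟩)
    ?_ ?_ ?_ ?_ ?_ <;>
  rintro ⟨p, q⟩ hp <;>
  simp only [mem_sigma, mem_Icc, mem_range, Sigma.mk.injEq, heq_eq_eq] at hp ⊢
  · omega
  · omega
  · omega
  · omega
  · congr 1 <;> omega

theorem lemma_S2_sum_general (n : ℕ) :
    ∑ i ∈ Finset.Icc 2 n, ∑ j ∈ Finset.Icc i n,
        (Nat.choose (i - 1 + n - j) (n - j) : ℤ) *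
          ((Nat.choose (n - i + j) j : ℤ) - (Nat.choose (n - i + j) (j + 1) : ℤ)) =
      -((n : ℤ) - 1) - (Nat.choose (2 * n) n : ℤ) + 2 * (Nat.choose (2 * n) (n + 1) : ℤ) := by
  obtain _ | m := n
  · rfl
  rw [sum_Icc_Icc_eq_sum_range_range]
  calc _ = ∑ s ∈ range (m + 1), ∑ b ∈ range s,
        (s.choose b : ℤ) * chooseDiff (m + (m + 1) - s) (m + 1 - b) := by
        refine sum_congr rfl fun s hs => sum_congr rfl fun b hb => ?_
        rw [mem_range] at hs hb
        rw [chooseDiff, show s + 1 - b - 1 + (m + 1) - (m + 1 - b) = s by omega,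
          show m + 1 - (m + 1 - b) = b by omega,
          show m + 1 - (s + 1 - b) + (m + 1 - b) = m + (m + 1) - s by omega]
    _ = ∑ s ∈ range (m + 1),
        (chooseDiff (2 * m + 1) (m + 1) - chooseDiff (m + (m + 1) - s) (m + 1 - s)) := by
        refine sum_congr rfl fun s hs => ?_
        rw [mem_range] at hs
        rw [sum_range_choose_mul_chooseDiff _ _ _ (by omega),
          show s + (m + (m + 1) - s) = 2 * m + 1 by omega]
    _ = (m + 1) * chooseDiff (2 * m + 1) (m + 1) - (chooseDiff (2 * (m + 1)) (m + 1) + m) := by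
        rw [sum_sub_distrib, sum_range_chooseDiff_sub, sum_const, card_range, nsmul_eq_mul,
          show m + (m + 1) + 1 = 2 * (m + 1) by ring]
        push_cast
        ring
    _ = _ := by
        have hballot := add_one_mul_chooseDiff (2 * m + 1) (m + 1)
        rw [show 2 * m + 1 + 1 = 2 * (m + 1) by ring] at hballot
        simp only [chooseDiff] at hballot ⊢
        push_cast at hballot ⊢
        linarith

/-- The paper's Lemma (lem4, formula (34)): evaluation of the sum `S₂`. -/
theorem lemma_S2_sum (n : ℕ) (hn : 1 ≤ n) :
    ∑ i ∈ Finset.Icc 2 n, ∑ j ∈ Finset.Icc i n,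
        (Nat.choose (i - 1 + n - j) (n - j) : ℤ) *
          ((Nat.choose (n - i + j) j : ℤ) - (Nat.choose (n - i + j) (j + 1) : ℤ)) =
      -((n : ℤ) - 1) - (Nat.choose (2 * n) n : ℤ) + 2 * (Nat.choose (2 * n) (n + 1) : ℤ) :=
  lemma_S2_sum_general n
end

section
/- Let m, a, b be positive integers with m ≥ a+b and a ≥ b. Then the following identity holds in ℚ: Σ_{s=a}^{a+b} C(m,s) · C(s, a+b−s) · (1/(s−b+1)) · C(2s−a−b, s−a) = (1/(m+1)) · C(m+1, a+1) · C(m+1, b). -/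
/-!
Writing `s = a + j`, the `j`-th summand factors as `C(m, a) / (a + 1) · C(m - a, j) · C(a + 1, b - j)`,
a direct factorial computation. The sum is therefore `C(m, a) / (a + 1)` times a Vandermonde
convolution, which equals `C(m + 1, b)`, and `C(m, a) / (a + 1) = C(m + 1, a + 1) / (m + 1)`.
-/

open Finset

namespace Nat

lemma sum_range_choose_mul_choose_sub (n p b : ℕ) :
    ∑ j ∈ range (b + 1), n.choose j * p.choose (b - j) = (n + p).choose b := by
  rw [add_choose_eq, Finset.Nat.sum_antidiagonal_eq_sum_range_succ_mk]

lemma cast_choose_div_add_one (m a : ℕ) :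
    (m.choose a : ℚ) / (a + 1) = 1 / (m + 1) * (m + 1).choose (a + 1) := by
  have h : ((m + 1 : ℕ) : ℚ) * m.choose a = (m + 1).choose (a + 1) * (a + 1 : ℕ) := by
    exact_mod_cast add_one_mul_choose_eq m a
  push_cast at h
  field_simp
  linarith

lemma cast_choose_mul_choose_mul_choose_div (c j k d : ℕ) :
    ((c + 2 * j + 2 * k + d).choose (c + 2 * j + k) : ℚ) * (c + 2 * j + k).choose k *
        (c + 2 * j).choose j / (c + j + 1) =
      (c + 2 * j + 2 * k + d).choose (c + j + k) / (c + j + k + 1) *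
        ((j + k + d).choose j * (c + j + k + 1).choose k) := by
  rw [cast_choose ℚ (by omega : c + 2 * j + k ≤ c + 2 * j + 2 * k + d),
    cast_choose ℚ (by omega : k ≤ c + 2 * j + k), cast_choose ℚ (by omega : j ≤ c + 2 * j),
    cast_choose ℚ (by omega : c + j + k ≤ c + 2 * j + 2 * k + d),
    cast_choose ℚ (by omega : j ≤ j + k + d), cast_choose ℚ (by omega : k ≤ c + j + k + 1),
    show c + 2 * j + 2 * k + d - (c + 2 * j + k) = k + d by omega,
    show c + 2 * j + k - k = c + 2 * j by omega, show c + 2 * j - j = c + j by omega,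
    show c + 2 * j + 2 * k + d - (c + j + k) = j + k + d by omega,
    show j + k + d - j = k + d by omega, show c + j + k + 1 - k = c + j + 1 by omega,
    factorial_succ (c + j), factorial_succ (c + j + k)]
  push_cast
  field_simp

lemma cast_choose_mul_choose_mul_choose_div_of_le (m a b j : ℕ) (hj : j ≤ b) (hab : b ≤ a)
    (hm : a + b ≤ m) :
    (m.choose (a + j) : ℚ) * (a + j).choose (a + b - (a + j)) * (1 / ((a + j : ℕ) - b + 1 : ℚ)) *
        (2 * (a + j) - a - b).choose (a + j - a) =
      m.choose a / (a + 1) * ((m - a).choose j * (a + 1).choose (b - j)) := by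
  obtain ⟨k, rfl⟩ := exists_add_of_le hj
  obtain ⟨c, rfl⟩ := exists_add_of_le hab
  obtain ⟨d, rfl⟩ := exists_add_of_le hm
  rw [mul_right_comm _ (1 / _ : ℚ), mul_one_div]
  convert cast_choose_mul_choose_mul_choose_div c j k d using 4
  all_goals first | (congr 1 <;> omega) | (congr 2 <;> omega) | (push_cast; ring1)

end Nat

theorem lemma_Lmm3_general (m a b : ℕ) (hm : a + b ≤ m) (hab : b ≤ a) :
    ∑ s ∈ Finset.Icc a (a + b),
        (Nat.choose m s : ℚ) * (Nat.choose s (a + b - s) : ℚ) * (1 / ((s : ℚ) - b + 1)) *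
          (Nat.choose (2 * s - a - b) (s - a) : ℚ) =
      (1 / ((m : ℚ) + 1)) * (Nat.choose (m + 1) (a + 1) : ℚ) * (Nat.choose (m + 1) b : ℚ) := by
  rw [← Ico_add_one_right_eq_Icc, sum_Ico_eq_sum_range, show a + b + 1 - a = b + 1 by omega]
  have hsummand := fun j (hj : j ∈ range (b + 1)) =>
    Nat.cast_choose_mul_choose_mul_choose_div_of_le m a b j
      (Nat.lt_succ_iff.mp (mem_range.mp hj)) hab hm
  have hvandermonde : ∑ j ∈ range (b + 1), ((m - a).choose j * (a + 1).choose (b - j) : ℚ) =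
      (m + 1).choose b := by
    rw [show m + 1 = m - a + (a + 1) by omega]
    exact_mod_cast Nat.sum_range_choose_mul_choose_sub (m - a) (a + 1) b
  rw [sum_congr rfl hsummand, ← mul_sum, hvandermonde, Nat.cast_choose_div_add_one]

/-- The paper's Lemma (Lmm3, formula (12)). -/
theorem lemma_Lmm3 (m a b : ℕ) (ha : 0 < a) (hb : 0 < b) (hm : a + b ≤ m) (hab : b ≤ a) :
    ∑ s ∈ Finset.Icc a (a + b),
        (Nat.choose m s : ℚ) * (Nat.choose s (a + b - s) : ℚ) * (1 / ((s : ℚ) - b + 1)) *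
          (Nat.choose (2 * s - a - b) (s - a) : ℚ) =
      (1 / ((m : ℚ) + 1)) * (Nat.choose (m + 1) (a + 1) : ℚ) * (Nat.choose (m + 1) b : ℚ) :=
  lemma_Lmm3_general m a b hm hab
end
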